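/- arXiv:1202.2708 — 6 statements merged into one kernel-verified Lean document; each statement's English description precedes it below -/
import Mathlib

section
/- For every σ ∈ [0,1] there exists a constant C_σ > 0 such that for all 0 < s < t and every x ∈ D_σ, ‖S(t)x − S(s)x‖ ≤ C_σ (t−s)^σ e^{-λ₀ s/2} |x|_σ. -/
open Real MeasureTheory Set Filter
open scoped ENNReal Topology

noncomputable section

/-- `Hsp` is the real Hilbert space `ℓ²` of square-summable real sequences. -/
abbrev Hsp : Type := lp (fun _ : ℕ => ℝ) 2

/-- The norm `|x|_σ = (∑ₖ λₖ^{2σ} xₖ²)^{1/2}` of the domain `D((-A)^σ)`. -/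
noncomputable def nrmD (lam : ℕ → ℝ) (σ : ℝ) (x : Hsp) : ℝ :=
  Real.sqrt (∑' k, lam k ^ (2 * σ) * (x k) ^ 2)

/-- Membership in the domain `D((-A)^σ)`: `∑ₖ λₖ^{2σ} xₖ² < ∞`. -/
def memD (lam : ℕ → ℝ) (σ : ℝ) (x : Hsp) : Prop :=
  Summable (fun k => lam k ^ (2 * σ) * (x k) ^ 2)

private lemma one_sub_exp_neg_le_rpow {σ u : ℝ} (hσ0 : 0 ≤ σ) (hσ1 : σ ≤ 1) (hu : 0 < u) :
    1 - Real.exp (-u) ≤ u ^ σ := by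
  rcases le_or_gt u 1 with h | h
  · have h1 : 1 - Real.exp (-u) ≤ u := by nlinarith [Real.add_one_le_exp (-u)]
    calc 1 - Real.exp (-u) ≤ u := h1
      _ = u ^ (1:ℝ) := (Real.rpow_one u).symm
      _ ≤ u ^ σ := Real.rpow_le_rpow_of_exponent_ge hu h hσ1
  · have : 1 - Real.exp (-u) ≤ 1 := by linarith [Real.exp_pos (-u)]
    calc 1 - Real.exp (-u) ≤ 1 := this
      _ ≤ u ^ σ := Real.one_le_rpow h.le hσ0

/-- Time-Hölder estimate (3) of Proposition 2.6 for regular initial data: for `σ ∈ [0,1]`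
there is `C_σ > 0` with `‖S(t)x − S(s)x‖ ≤ C_σ (t−s)^σ e^{-λ₀ s/2} |x|_σ`
for all `0 < s < t` and `x ∈ D_σ`. -/
theorem stmt2
    (lam : ℕ → ℝ) (lam0 : ℝ) (hlam0 : 0 < lam0) (hlam : ∀ k, lam0 ≤ lam k)
    (S : ℝ → Hsp → Hsp)
    (hS : ∀ t : ℝ, 0 ≤ t → ∀ (x : Hsp) (k : ℕ), S t x k = Real.exp (-(lam k * t)) * x k)
    (σ : ℝ) (hσ : σ ∈ Set.Icc (0:ℝ) 1) :
    ∃ C > 0, ∀ s t : ℝ, 0 < s → s < t → ∀ x : Hsp, memD lam σ x →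
      ‖S t x - S s x‖ ≤ C * (t - s) ^ σ * Real.exp (-(lam0 * s) / 2) * nrmD lam σ x := by
  obtain ⟨hσ0, hσ1⟩ := hσ
  refine ⟨1, one_pos, fun s t hs hst x hx => ?_⟩
  have ht : (0:ℝ) < t := hs.trans hst
  set c : ℝ := (t - s) ^ σ * Real.exp (-(lam0 * s) / 2) with hc
  have hc0 : 0 ≤ c := mul_nonneg (Real.rpow_nonneg (by linarith) σ) (Real.exp_pos _).le
  -- pointwise bound
  have hpt : ∀ k : ℕ, ‖(S t x - S s x) k‖ ^ 2 ≤ c ^ 2 * (lam k ^ (2 * σ) * (x k) ^ 2) := by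
    intro k
    have hk0 : 0 < lam k := lt_of_lt_of_le hlam0 (hlam k)
    have happ : (S t x - S s x) k = (Real.exp (-(lam k * t)) - Real.exp (-(lam k * s))) * x k := by
      rw [lp.coeFn_sub, Pi.sub_apply, hS t ht.le, hS s hs.le]; ring
    have hfac : Real.exp (-(lam k * t)) = Real.exp (-(lam k * s)) * Real.exp (-(lam k * (t - s))) := by
      rw [← Real.exp_add]; ring_nf
    have hbound : |Real.exp (-(lam k * t)) - Real.exp (-(lam k * s))| ≤
        c * lam k ^ σ := by
      have h1 : |Real.exp (-(lam k * t)) - Real.exp (-(lam k * s))| =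
          Real.exp (-(lam k * s)) * (1 - Real.exp (-(lam k * (t - s)))) := by
        rw [abs_sub_comm, abs_of_nonneg]
        · rw [hfac]; ring
        · rw [hfac]
          nlinarith [Real.exp_pos (-(lam k * s)), Real.exp_pos (-(lam k * (t - s))),
            Real.exp_le_one_iff.2 (by nlinarith : -(lam k * (t - s)) ≤ 0)]
      rw [h1]
      have h2 : Real.exp (-(lam k * s)) ≤ Real.exp (-(lam0 * s) / 2) := by
        apply Real.exp_le_exp.2; nlinarith [hlam k]
      have h3 : 1 - Real.exp (-(lam k * (t - s))) ≤ (lam k * (t - s)) ^ σ :=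
        one_sub_exp_neg_le_rpow hσ0 hσ1 (by nlinarith)
      have h4 : (lam k * (t - s)) ^ σ = lam k ^ σ * (t - s) ^ σ :=
        Real.mul_rpow hk0.le (by linarith)
      have h5 : 0 ≤ 1 - Real.exp (-(lam k * (t - s))) := by
        nlinarith [Real.exp_le_one_iff.2 (by nlinarith : -(lam k * (t - s)) ≤ 0)]
      calc Real.exp (-(lam k * s)) * (1 - Real.exp (-(lam k * (t - s))))
          ≤ Real.exp (-(lam0 * s) / 2) * (lam k ^ σ * (t - s) ^ σ) := by
            apply mul_le_mul h2 (h4 ▸ h3) h5 (Real.exp_pos _).le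
        _ = c * lam k ^ σ := by rw [hc]; ring
    have h6 : lam k ^ (2 * σ) = (lam k ^ σ) ^ 2 := by
      rw [← Real.rpow_natCast (lam k ^ σ) 2, ← Real.rpow_mul hk0.le]
      norm_num; ring_nf
    calc ‖(S t x - S s x) k‖ ^ 2 = |Real.exp (-(lam k * t)) - Real.exp (-(lam k * s))| ^ 2 * (x k) ^ 2 := by
          rw [happ, Real.norm_eq_abs, abs_mul, mul_pow, sq_abs (x k)]
      _ ≤ (c * lam k ^ σ) ^ 2 * (x k) ^ 2 := by
          gcongr
      _ = c ^ 2 * (lam k ^ (2 * σ) * (x k) ^ 2) := by rw [h6]; ring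
  -- summability
  have hsum2 : Summable (fun k => c ^ 2 * (lam k ^ (2 * σ) * (x k) ^ 2)) := hx.mul_left _
  have hsum1 : Summable (fun k => ‖(S t x - S s x) k‖ ^ 2) :=
    hsum2.of_nonneg_of_le (fun k => by positivity) hpt
  have hnorm : ‖S t x - S s x‖ ^ 2 = ∑' k, ‖(S t x - S s x) k‖ ^ 2 := by
    have := lp.norm_rpow_eq_tsum (p := 2) (by norm_num) (S t x - S s x)
    simpa [Real.rpow_natCast, ENNReal.toReal_ofNat] using this
  have hT0 : 0 ≤ c * nrmD lam σ x := mul_nonneg hc0 (Real.sqrt_nonneg _)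
  have hsq : ‖S t x - S s x‖ ^ 2 ≤ (c * nrmD lam σ x) ^ 2 := by
    rw [hnorm, mul_pow, nrmD, Real.sq_sqrt (tsum_nonneg fun k => mul_nonneg (Real.rpow_nonneg (hlam0.trans_le (hlam k)).le _) (sq_nonneg _))]
    calc ∑' k, ‖(S t x - S s x) k‖ ^ 2 ≤ ∑' k, c ^ 2 * (lam k ^ (2 * σ) * (x k) ^ 2) :=
          Summable.tsum_le_tsum hpt hsum1 hsum2
      _ = c ^ 2 * ∑' k, lam k ^ (2 * σ) * (x k) ^ 2 := tsum_mul_left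
  have : ‖S t x - S s x‖ ≤ c * nrmD lam σ x := by
    exact (pow_le_pow_iff_left₀ (norm_nonneg _) hT0 two_ne_zero).mp hsq
  calc ‖S t x - S s x‖ ≤ c * nrmD lam σ x := this
    _ = 1 * (t - s) ^ σ * Real.exp (-(lam0 * s) / 2) * nrmD lam σ x := by rw [hc]; ring


end
end

section
/- Let M ≥ 0, let f : [0,∞) → H be continuous with ‖f(s)‖ ≤ M for all s, let x ∈ H, and define X(t) = S(t)x + ∫₀^t S(t−s) f(s) ds for t ≥ 0 (Bochner integral in H). Then for every r ∈ (0,1) there exists a constant C (depending only on r, λ₀ and M) such that for all 0 < s ≤ t, ‖X(t) − X(s)‖ ≤ C (t−s)^{1−r} (1 + s^{-(1−r)}) (1 + ‖x‖). -/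
/-!
Write `β = 1 - r` and split `X t - X s` into `S t x - S s x`,
`∫₀ˢ (S (t - u) - S (s - u)) (f u) du` and `∫ₛᵗ S (t - u) (f u) du`. Coordinatewise everything
reduces to `e^{-λa} - e^{-λb} ≤ (b - a)^β λ^β e^{-λa}` for `a ≤ b`. For the first term,
`λ^β e^{-λs} ≤ s^{-β}`. For the second, `λ^β e^{-λv} ≤ 2^β v^{-β} e^{-λ₀v/2}`, which is integrable
on `(0, ∞)`, so the bound does not grow with `s`. The third term is at most
`M (1 - e^{-λ₀(t - s)}) / λ₀ ≤ M λ₀^{β-1} (t - s)^β`.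
-/

open Real MeasureTheory Set Filter
open scoped ENNReal Topology

noncomputable section

lemma rpow_le_exp {a b : ℝ} (ha : 0 ≤ a) (hb0 : 0 ≤ b) (hb1 : b ≤ 1) : a ^ b ≤ exp a := by
  rcases le_total a 1 with h1 | h1
  · calc a ^ b ≤ 1 := rpow_le_one ha h1 hb0
      _ ≤ exp a := one_le_exp ha
  · calc a ^ b ≤ a ^ (1 : ℝ) := rpow_le_rpow_of_exponent_le h1 hb1
      _ ≤ exp a := by rw [rpow_one]; linarith [add_one_le_exp a]

lemma one_sub_exp_neg_le_rpow_s9 {a b : ℝ} (ha : 0 ≤ a) (hb0 : 0 < b) (hb1 : b ≤ 1) :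
    1 - exp (-a) ≤ a ^ b := by
  rcases le_total a 1 with h1 | h1
  · calc 1 - exp (-a) ≤ a ^ (1 : ℝ) := by rw [rpow_one]; linarith [add_one_le_exp (-a)]
      _ ≤ a ^ b := rpow_le_rpow_of_exponent_ge' ha h1 hb0.le hb1
  · calc 1 - exp (-a) ≤ 1 := by linarith [exp_pos (-a)]
      _ ≤ a ^ b := one_le_rpow h1 hb0.le

lemma rpow_mul_exp_neg_mul_le {l v b : ℝ} (hl : 0 ≤ l) (hv : 0 < v) (hb0 : 0 ≤ b) (hb1 : b ≤ 1) :
    l ^ b * exp (-(l * v)) ≤ v ^ (-b) := by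
  rw [rpow_neg hv.le, ← one_div, le_div_iff₀ (rpow_pos_of_pos hv b),
    mul_right_comm, ← mul_rpow hl hv.le, exp_neg, ← div_eq_mul_inv, div_le_one (exp_pos _)]
  exact rpow_le_exp (by positivity) hb0 hb1

lemma exp_neg_mul_sub_exp_neg_mul_le {l τ₁ τ₂ b : ℝ} (hl : 0 ≤ l) (h12 : τ₁ ≤ τ₂) (hb0 : 0 < b)
    (hb1 : b ≤ 1) :
    exp (-(l * τ₁)) - exp (-(l * τ₂)) ≤ (τ₂ - τ₁) ^ b * (l ^ b * exp (-(l * τ₁))) := by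
  have hsplit : exp (-(l * τ₂)) = exp (-(l * τ₁)) * exp (-(l * (τ₂ - τ₁))) := by
    rw [← exp_add]; ring_nf
  calc exp (-(l * τ₁)) - exp (-(l * τ₂)) = exp (-(l * τ₁)) * (1 - exp (-(l * (τ₂ - τ₁)))) := by
        rw [hsplit]; ring
    _ ≤ exp (-(l * τ₁)) * (l * (τ₂ - τ₁)) ^ b := by
        gcongr
        exact one_sub_exp_neg_le_rpow_s9 (mul_nonneg hl (sub_nonneg.2 h12)) hb0 hb1
    _ = (τ₂ - τ₁) ^ b * (l ^ b * exp (-(l * τ₁))) := by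
        rw [mul_rpow hl (sub_nonneg.2 h12)]; ring

lemma integral_exp_neg_mul {c : ℝ} (hc : c ≠ 0) (h : ℝ) :
    ∫ v in (0 : ℝ)..h, exp (-(c * v)) = (1 - exp (-(c * h))) / c := by
  have hderiv : ∀ v ∈ uIcc 0 h, HasDerivAt (fun v => -exp (-(c * v)) / c) (exp (-(c * v))) v := by
    intro v _
    have hlin : HasDerivAt (fun v => -(c * v)) (-c) v := by
      simpa using ((hasDerivAt_id v).const_mul c).fun_neg
    exact (hlin.exp.fun_neg.div_const c).congr_deriv (by field_simp)
  rw [intervalIntegral.integral_eq_sub_of_hasDerivAt hderiv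
    (Continuous.intervalIntegrable (by fun_prop) _ _)]
  simp only [mul_zero, neg_zero, exp_zero]
  ring

def smoothingKernel (lam0 b v : ℝ) : ℝ := 2 ^ b * v ^ (-b) * exp (-(lam0 / 2 * v))

lemma smoothingKernel_nonneg (lam0 b : ℝ) {v : ℝ} (hv : 0 ≤ v) : 0 ≤ smoothingKernel lam0 b v := by
  unfold smoothingKernel; positivity

lemma integrableOn_smoothingKernel {lam0 b : ℝ} (hlam0 : 0 < lam0) (hb : b < 1) :
    IntegrableOn (smoothingKernel lam0 b) (Ioi 0) := by
  have h := (integrableOn_rpow_mul_exp_neg_mul_rpow (p := 1) (by linarith : -1 < -b) one_pos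
    (half_pos hlam0)).const_mul (2 ^ b)
  refine IntegrableOn.congr_fun h (fun v _ => ?_) measurableSet_Ioi
  simp only [smoothingKernel, rpow_one, neg_mul, mul_assoc]

lemma rpow_mul_exp_neg_mul_le_smoothingKernel {lam0 l v b : ℝ} (hlam0 : 0 ≤ lam0) (hl : lam0 ≤ l)
    (hv : 0 < v) (hb0 : 0 ≤ b) (hb1 : b ≤ 1) :
    l ^ b * exp (-(l * v)) ≤ smoothingKernel lam0 b v := by
  have hhalf : (v / 2) ^ (-b) = 2 ^ b * v ^ (-b) := by
    rw [div_rpow hv.le zero_le_two, rpow_neg zero_le_two, div_eq_mul_inv, inv_inv, mul_comm]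
  calc l ^ b * exp (-(l * v)) = l ^ b * exp (-(l * (v / 2))) * exp (-(l * (v / 2))) := by
        rw [mul_assoc, ← exp_add]; ring_nf
    _ ≤ (v / 2) ^ (-b) * exp (-(lam0 / 2 * v)) := by
        refine mul_le_mul (rpow_mul_exp_neg_mul_le (hlam0.trans hl) (half_pos hv) hb0 hb1)
          (exp_le_exp.2 ?_) (exp_pos _).le (by positivity)
        nlinarith
    _ = smoothingKernel lam0 b v := by rw [hhalf, smoothingKernel]

theorem lp.norm_le_mul_norm_of_forall_le {α : Type*} {E : α → Type*}
    [∀ i, NormedAddCommGroup (E i)] [∀ i, NormedSpace ℝ (E i)] {p : ℝ≥0∞} [Fact (1 ≤ p)]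
    {x y : lp E p} {c : ℝ} (hc : 0 ≤ c) (h : ∀ i, ‖x i‖ ≤ c * ‖y i‖) : ‖x‖ ≤ c * ‖y‖ := by
  calc ‖x‖ ≤ ‖c • y‖ := lp.norm_mono (zero_lt_one.trans_le Fact.out).ne' fun i => by
        simpa [lp.coeFn_smul, norm_smul, abs_of_nonneg hc] using h i
    _ = c * ‖y‖ := by rw [norm_smul, norm_of_nonneg hc]

def IsDiagonalSemigroup (lam : ℕ → ℝ) (S : ℝ → Hsp → Hsp) : Prop :=
  ∀ t : ℝ, 0 ≤ t → ∀ (x : Hsp) (k : ℕ), S t x k = exp (-(lam k * t)) * x k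

namespace IsDiagonalSemigroup

variable {lam : ℕ → ℝ} {S : ℝ → Hsp → Hsp} {τ τ₁ τ₂ b : ℝ}

lemma apply_sub (hS : IsDiagonalSemigroup lam S) (hτ : 0 ≤ τ) (y z : Hsp) :
    S τ y - S τ z = S τ (y - z) := by
  ext k
  simp only [lp.coeFn_sub, Pi.sub_apply, hS τ hτ]
  ring

lemma norm_apply_le_exp (hS : IsDiagonalSemigroup lam S) {lam0 : ℝ} (hlam : ∀ k, lam0 ≤ lam k)
    (hτ : 0 ≤ τ) (y : Hsp) : ‖S τ y‖ ≤ exp (-(lam0 * τ)) * ‖y‖ :=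
  lp.norm_le_mul_norm_of_forall_le (exp_pos _).le fun k => by
    rw [hS τ hτ, norm_mul, norm_of_nonneg (exp_pos _).le]
    gcongr
    exact hlam k

lemma norm_apply_le (hS : IsDiagonalSemigroup lam S) (hlam : ∀ k, 0 ≤ lam k) (hτ : 0 ≤ τ)
    (y : Hsp) : ‖S τ y‖ ≤ ‖y‖ := by
  simpa using hS.norm_apply_le_exp hlam hτ y

lemma norm_apply_sub_apply_le (hS : IsDiagonalSemigroup lam S) (hlam : ∀ k, 0 ≤ lam k)
    (hτ₁ : 0 ≤ τ₁) (h12 : τ₁ ≤ τ₂) (hb0 : 0 < b) (hb1 : b ≤ 1) {c : ℝ}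
    (hc : ∀ k, lam k ^ b * exp (-(lam k * τ₁)) ≤ c) (y : Hsp) :
    ‖S τ₂ y - S τ₁ y‖ ≤ (τ₂ - τ₁) ^ b * c * ‖y‖ := by
  have hc0 : 0 ≤ c := (mul_nonneg (rpow_nonneg (hlam 0) b) (exp_pos _).le).trans (hc 0)
  refine lp.norm_le_mul_norm_of_forall_le (by positivity) fun k => ?_
  rw [lp.coeFn_sub, Pi.sub_apply, hS τ₂ (hτ₁.trans h12), hS τ₁ hτ₁, ← sub_mul, norm_mul,
    norm_sub_rev, norm_of_nonneg (sub_nonneg.2 (exp_le_exp.2 (by nlinarith [hlam k])))]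
  gcongr
  calc exp (-(lam k * τ₁)) - exp (-(lam k * τ₂))
      ≤ (τ₂ - τ₁) ^ b * (lam k ^ b * exp (-(lam k * τ₁))) :=
        exp_neg_mul_sub_exp_neg_mul_le (hlam k) h12 hb0 hb1
    _ ≤ (τ₂ - τ₁) ^ b * c := by gcongr; exact hc k

lemma norm_apply_sub_apply_le_rpow (hS : IsDiagonalSemigroup lam S) (hlam : ∀ k, 0 ≤ lam k)
    (hτ₁ : 0 < τ₁) (h12 : τ₁ ≤ τ₂) (hb0 : 0 < b) (hb1 : b ≤ 1) (y : Hsp) :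
    ‖S τ₂ y - S τ₁ y‖ ≤ (τ₂ - τ₁) ^ b * τ₁ ^ (-b) * ‖y‖ :=
  hS.norm_apply_sub_apply_le hlam hτ₁.le h12 hb0 hb1
    (fun k => rpow_mul_exp_neg_mul_le (hlam k) hτ₁ hb0.le hb1) y

lemma norm_apply_sub_apply_le_smoothingKernel (hS : IsDiagonalSemigroup lam S) {lam0 : ℝ}
    (hlam0 : 0 ≤ lam0) (hlam : ∀ k, lam0 ≤ lam k) (hτ₁ : 0 < τ₁) (h12 : τ₁ ≤ τ₂) (hb0 : 0 < b)
    (hb1 : b ≤ 1) (y : Hsp) :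
    ‖S τ₂ y - S τ₁ y‖ ≤ (τ₂ - τ₁) ^ b * smoothingKernel lam0 b τ₁ * ‖y‖ :=
  hS.norm_apply_sub_apply_le (fun k => hlam0.trans (hlam k)) hτ₁.le h12 hb0 hb1
    (fun k => rpow_mul_exp_neg_mul_le_smoothingKernel hlam0 (hlam k) hτ₁ hb0.le hb1) y

lemma lipschitzOnWith_apply (hS : IsDiagonalSemigroup lam S) (hlam : ∀ k, 0 ≤ lam k) {δ : ℝ}
    (hδ : 0 < δ) (y : Hsp) :
    LipschitzOnWith (‖y‖₊ / δ.toNNReal) (fun τ => S τ y) (Ici δ) := by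
  have key : ∀ τ₁ ∈ Ici δ, ∀ τ₂, τ₁ ≤ τ₂ → dist (S τ₂ y) (S τ₁ y) ≤ ‖y‖ / δ * dist τ₂ τ₁ := by
    intro τ₁ hτ₁ τ₂ h12
    have hτ₁' : δ ≤ τ₁ := hτ₁
    rw [dist_eq_norm, Real.dist_eq, abs_of_nonneg (sub_nonneg.2 h12)]
    refine (hS.norm_apply_sub_apply_le_rpow hlam (hδ.trans_le hτ₁') h12 one_pos le_rfl y).trans ?_
    rw [rpow_one, rpow_neg_one]
    calc (τ₂ - τ₁) * τ₁⁻¹ * ‖y‖ ≤ (τ₂ - τ₁) * δ⁻¹ * ‖y‖ := by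
          gcongr
      _ = ‖y‖ / δ * (τ₂ - τ₁) := by ring
  refine LipschitzOnWith.of_dist_le_mul fun τ₁ h₁ τ₂ h₂ => ?_
  rw [NNReal.coe_div, coe_nnnorm, Real.coe_toNNReal _ hδ.le]
  rcases le_total τ₁ τ₂ with h | h
  · rw [dist_comm, dist_comm τ₁]; exact key τ₁ h₁ τ₂ h
  · exact key τ₂ h₂ τ₁ h

lemma continuousOn_apply (hS : IsDiagonalSemigroup lam S) (hlam : ∀ k, 0 ≤ lam k) (y : Hsp) :
    ContinuousOn (fun τ => S τ y) (Ioi 0) := fun _ hτ =>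
  ((hS.lipschitzOnWith_apply hlam (half_pos hτ) y).continuousOn.continuousAt
    (Ici_mem_nhds (half_lt_self hτ))).continuousWithinAt

lemma continuousOn_comp (hS : IsDiagonalSemigroup lam S) (hlam : ∀ k, 0 ≤ lam k) {s : Set ℝ}
    {τ : ℝ → ℝ} {g : ℝ → Hsp} (hτ : ContinuousOn τ s) (hτs : MapsTo τ s (Ioi 0))
    (hg : ContinuousOn g s) : ContinuousOn (fun u => S (τ u) (g u)) s := by
  intro u₀ hu₀
  have hfrozen : ContinuousWithinAt (fun u => S (τ u) (g u₀)) s u₀ :=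
    (hS.continuousOn_apply hlam (g u₀) (τ u₀) (hτs hu₀)).comp (hτ u₀ hu₀) hτs
  have hlim : Tendsto (fun u => ‖g u - g u₀‖ + ‖S (τ u) (g u₀) - S (τ u₀) (g u₀)‖)
      (𝓝[s] u₀) (𝓝 0) := by
    simpa using (tendsto_iff_norm_sub_tendsto_zero.1 (hg u₀ hu₀)).add
      (tendsto_iff_norm_sub_tendsto_zero.1 hfrozen)
  rw [ContinuousWithinAt, tendsto_iff_norm_sub_tendsto_zero]
  refine squeeze_zero' (Eventually.of_forall fun _ => norm_nonneg _) ?_ hlim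
  filter_upwards [self_mem_nhdsWithin] with u hu
  have hτu : 0 ≤ τ u := (hτs hu).le
  calc ‖S (τ u) (g u) - S (τ u₀) (g u₀)‖
      = ‖S (τ u) (g u - g u₀) + (S (τ u) (g u₀) - S (τ u₀) (g u₀))‖ := by
        rw [← hS.apply_sub hτu]; abel_nf
    _ ≤ ‖g u - g u₀‖ + ‖S (τ u) (g u₀) - S (τ u₀) (g u₀)‖ :=
        (norm_add_le _ _).trans (by gcongr; exact hS.norm_apply_le hlam hτu _)

variable {f : ℝ → Hsp} {M : ℝ}

/-- The Lipschitz bounds only give continuity of the integrand on `[0, T)`, which suffices since it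
is bounded. -/
lemma intervalIntegrable_apply_sub (hS : IsDiagonalSemigroup lam S) (hlam : ∀ k, 0 ≤ lam k)
    (hf : ContinuousOn f (Ici 0)) (hfM : ∀ s, 0 ≤ s → ‖f s‖ ≤ M) {T : ℝ} (hT : 0 ≤ T) :
    IntervalIntegrable (fun u => S (T - u) (f u)) volume 0 T := by
  rw [intervalIntegrable_iff_integrableOn_Ico_of_le hT]
  have hcont : ContinuousOn (fun u => S (T - u) (f u)) (Ico 0 T) :=
    hS.continuousOn_comp hlam (continuousOn_const.sub continuousOn_id)
      (fun u hu => sub_pos.2 hu.2) (hf.mono fun u hu => hu.1)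
  refine ⟨hcont.aestronglyMeasurable measurableSet_Ico,
    HasFiniteIntegral.restrict_of_bounded (C := M) measure_Ico_lt_top ?_⟩
  filter_upwards [ae_restrict_mem measurableSet_Ico] with u hu
  exact (hS.norm_apply_le hlam (by linarith [hu.2]) _).trans (hfM u hu.1)

lemma norm_integral_apply_sub_apply_le (hS : IsDiagonalSemigroup lam S) {lam0 : ℝ}
    (hlam0 : 0 < lam0) (hlam : ∀ k, lam0 ≤ lam k) (hb0 : 0 < b) (hb1 : b < 1) (hM : 0 ≤ M)
    (hfM : ∀ s, 0 ≤ s → ‖f s‖ ≤ M) {s t : ℝ} (hs : 0 ≤ s) (hst : s ≤ t) :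
    ‖∫ u in (0 : ℝ)..s, (S (t - u) (f u) - S (s - u) (f u))‖ ≤
      M * (t - s) ^ b * ∫ v in Ioi 0, smoothingKernel lam0 b v := by
  have hK := integrableOn_smoothingKernel hlam0 hb1
  have hbound : ∀ᵐ u, u ∈ Ioc 0 s →
      ‖S (t - u) (f u) - S (s - u) (f u)‖ ≤ M * (t - s) ^ b * smoothingKernel lam0 b (s - u) := by
    filter_upwards [Measure.ae_ne volume s] with u hus hu
    have h := hS.norm_apply_sub_apply_le_smoothingKernel hlam0.le hlam
      (sub_pos.2 (lt_of_le_of_ne hu.2 hus)) (sub_le_sub_right hst u) hb0 hb1.le (f u)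
    rw [sub_sub_sub_cancel_right] at h
    refine h.trans ?_
    rw [mul_comm M, mul_right_comm]
    gcongr
    · exact smoothingKernel_nonneg _ _ (sub_nonneg.2 hu.2)
    · exact hfM u hu.1.le
  have hKint : IntervalIntegrable (fun u => smoothingKernel lam0 b (s - u)) volume 0 s := by
    have h := ((intervalIntegrable_iff_integrableOn_Ioc_of_le hs).2
      (hK.mono_set Ioc_subset_Ioi_self)).comp_sub_left s
    simpa using h.symm
  calc ‖∫ u in (0 : ℝ)..s, (S (t - u) (f u) - S (s - u) (f u))‖
      ≤ ∫ u in (0 : ℝ)..s, M * (t - s) ^ b * smoothingKernel lam0 b (s - u) :=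
        intervalIntegral.norm_integral_le_of_norm_le hs hbound (hKint.const_mul _)
    _ = M * (t - s) ^ b * ∫ v in (0 : ℝ)..s, smoothingKernel lam0 b v := by
        rw [intervalIntegral.integral_const_mul, intervalIntegral.integral_comp_sub_left]
        simp
    _ ≤ M * (t - s) ^ b * ∫ v in Ioi 0, smoothingKernel lam0 b v := by
        gcongr
        rw [intervalIntegral.integral_of_le hs]
        refine setIntegral_mono_set hK ?_ Ioc_subset_Ioi_self.eventuallyLE
        filter_upwards [ae_restrict_mem measurableSet_Ioi] with v hv
        exact smoothingKernel_nonneg _ _ (le_of_lt hv)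

lemma norm_integral_apply_sub_le (hS : IsDiagonalSemigroup lam S) {lam0 : ℝ} (hlam0 : 0 < lam0)
    (hlam : ∀ k, lam0 ≤ lam k) (hb0 : 0 < b) (hb1 : b ≤ 1) (hM : 0 ≤ M)
    (hfM : ∀ s, 0 ≤ s → ‖f s‖ ≤ M) {s t : ℝ} (hs : 0 ≤ s) (hst : s ≤ t) :
    ‖∫ u in s..t, S (t - u) (f u)‖ ≤ M * lam0 ^ (b - 1) * (t - s) ^ b := by
  have hbound : ∀ᵐ u, u ∈ Ioc s t → ‖S (t - u) (f u)‖ ≤ M * exp (-(lam0 * (t - u))) :=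
    Eventually.of_forall fun u hu => (hS.norm_apply_le_exp hlam (by linarith [hu.2]) _).trans
      (by rw [mul_comm M]; gcongr; exact hfM u (by linarith [hu.1]))
  calc ‖∫ u in s..t, S (t - u) (f u)‖ ≤ ∫ u in s..t, M * exp (-(lam0 * (t - u))) :=
        intervalIntegral.norm_integral_le_of_norm_le hst hbound
          (Continuous.intervalIntegrable (by fun_prop) _ _)
    _ = M * ((1 - exp (-(lam0 * (t - s)))) / lam0) := by
        rw [intervalIntegral.integral_const_mul,
          intervalIntegral.integral_comp_sub_left (fun v => exp (-(lam0 * v))), sub_self,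
          integral_exp_neg_mul hlam0.ne']
    _ ≤ M * ((lam0 * (t - s)) ^ b / lam0) := by
        gcongr
        exact one_sub_exp_neg_le_rpow_s9 (mul_nonneg hlam0.le (sub_nonneg.2 hst)) hb0 hb1
    _ = M * lam0 ^ (b - 1) * (t - s) ^ b := by
        rw [mul_rpow hlam0.le (sub_nonneg.2 hst), rpow_sub_one hlam0.ne']
        ring

end IsDiagonalSemigroup

lemma mul_add_le_mul_one_add_mul_one_add {P q n A : ℝ} (hP : 0 ≤ P) (hq : 0 ≤ q) (hn : 0 ≤ n)
    (hA : 0 ≤ A) : P * q * n + P * A ≤ (1 + A) * P * (1 + q) * (1 + n) := by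
  have hw : 1 ≤ (1 + q) * (1 + n) := by nlinarith
  have : q * n + A ≤ (1 + A) * ((1 + q) * (1 + n)) := by nlinarith
  nlinarith

/-- Deterministic content of Proposition A.3 (time-Hölder regularity of the slow component):
for `X(t) = S(t)x + ∫₀ᵗ S(t−s) f(s) ds` with `‖f‖ ≤ M`, and `r ∈ (0,1)`, there is a
constant `C` (depending only on `r`, `λ₀`, `M`) with
`‖X(t) − X(s)‖ ≤ C (t−s)^{1−r} (1 + s^{-(1−r)}) (1 + ‖x‖)` for `0 < s ≤ t`. -/
theorem stmt9
    (lam : ℕ → ℝ) (lam0 : ℝ) (hlam0 : 0 < lam0) (hlam : ∀ k, lam0 ≤ lam k)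
    (S : ℝ → Hsp → Hsp)
    (hS : ∀ t : ℝ, 0 ≤ t → ∀ (x : Hsp) (k : ℕ), S t x k = Real.exp (-(lam k * t)) * x k)
    (M : ℝ) (hM : 0 ≤ M)
    (r : ℝ) (hr : r ∈ Set.Ioo (0:ℝ) 1) :
    ∃ C > 0, ∀ f : ℝ → Hsp, ContinuousOn f (Set.Ici 0) → (∀ s : ℝ, 0 ≤ s → ‖f s‖ ≤ M) →
      ∀ x : Hsp, ∀ X : ℝ → Hsp,
      (∀ t : ℝ, 0 ≤ t → X t = S t x + ∫ s in (0:ℝ)..t, S (t - s) (f s)) →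
      ∀ s t : ℝ, 0 < s → s ≤ t →
        ‖X t - X s‖ ≤ C * (t - s) ^ (1 - r) * (1 + s ^ (-(1 - r))) * (1 + ‖x‖) := by
  obtain ⟨hr0, hr1⟩ := hr
  have hS : IsDiagonalSemigroup lam S := hS
  have hlam' : ∀ k, 0 ≤ lam k := fun k => hlam0.le.trans (hlam k)
  set K := ∫ v in Ioi 0, smoothingKernel lam0 (1 - r) v
  have hK : 0 ≤ K := setIntegral_nonneg measurableSet_Ioi fun v hv =>
    smoothingKernel_nonneg _ _ (le_of_lt hv)
  refine ⟨1 + M * (K + lam0 ^ (1 - r - 1)), by positivity, ?_⟩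
  intro f hf hfM x X hX s t hs hst
  have ht : 0 ≤ t := hs.le.trans hst
  have hint_t := hS.intervalIntegrable_apply_sub hlam' hf hfM ht
  have hdecomp : X t - X s = (S t x - S s x) + ((∫ u in (0 : ℝ)..s,
      (S (t - u) (f u) - S (s - u) (f u))) + ∫ u in s..t, S (t - u) (f u)) := by
    have h0s := hint_t.mono_set (uIcc_subset_uIcc_left (mem_uIcc_of_le hs.le hst))
    have hst' := hint_t.mono_set (uIcc_subset_uIcc_right (mem_uIcc_of_le hs.le hst))
    rw [hX t ht, hX s hs.le, intervalIntegral.integral_sub h0s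
      (hS.intervalIntegrable_apply_sub hlam' hf hfM hs.le),
      ← intervalIntegral.integral_add_adjacent_intervals h0s hst']
    abel
  have hfree := hS.norm_apply_sub_apply_le_rpow hlam' hs hst (by linarith : 0 < 1 - r)
    (by linarith) x
  have hpast := hS.norm_integral_apply_sub_apply_le hlam0 hlam (by linarith : 0 < 1 - r)
    (by linarith) hM hfM hs.le hst
  have hrecent := hS.norm_integral_apply_sub_le hlam0 hlam (by linarith : 0 < 1 - r)
    (by linarith) hM hfM hs.le hst
  calc ‖X t - X s‖ ≤ (t - s) ^ (1 - r) * s ^ (-(1 - r)) * ‖x‖ +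
        (t - s) ^ (1 - r) * (M * (K + lam0 ^ (1 - r - 1))) := by
        rw [hdecomp]
        refine (norm_add_le_of_le hfree (norm_add_le_of_le hpast hrecent)).trans_eq ?_
        ring
    _ ≤ _ := mul_add_le_mul_one_add_mul_one_add (by positivity) (by positivity) (norm_nonneg x)
        (by positivity)

end
end

section
/- Let K ≥ 0, let Φ : [0,∞) → L(H) be a family of bounded linear operators on H with operator norm ‖Φ(s)‖ ≤ K for all s, let h ∈ H, and let η : [0,∞) → H be continuous, with s ↦ Φ(s)(η(s)) continuous, satisfying η(t) = S(t)h + ∫₀^t S(t−s) Φ(s)(η(s)) ds for all t ≥ 0. Then for every T > 0 and every r ∈ (0,1) there exists a constant C (depending only on T, r, K and λ₀) such that for all 0 < s ≤ t ≤ T, ‖η(t) − η(s)‖ ≤ C (t−s)^{1−r} (1 + s^{-(1−r)}) ‖h‖. -/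
/-!
Write `g u = Φ u (η u)` and split `η t - η s` into the free part `(S t - S s) h`, the past part
`∫₀ˢ (S (t - u) - S (s - u)) (g u)` and the recent part `∫ₛᵗ S (t - u) (g u)`. Coordinatewise,
`exp (-λ b) - exp (-λ a) ≤ (a - b) ^ θ * b ^ (-θ)` for `0 < b ≤ a`, `θ ∈ [0, 1]`, uniformly in
`λ ≥ 0`, because `1 - exp (-x) ≤ x ^ θ` and `y ^ θ * exp (-y) ≤ 1`. With `θ = 1 - r` this bounds
the free part, and the past part after integrating `(s - u) ^ (-(1 - r))`; the recent part is
`O(t - s)` since each `S τ` is a contraction. All three need `‖g‖ ≤ K e^{KT} ‖h‖` on `[0, T]`,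
which is Grönwall's inequality applied to the mild equation.
-/

open Real MeasureTheory Set Filter
open scoped ENNReal Topology

noncomputable section

namespace lp

variable {α : Type*} {E : α → Type*} [∀ i, NormedAddCommGroup (E i)] {p : ℝ≥0∞}

theorem norm_le_mul_of_forall_norm_le [∀ i, NormedSpace ℝ (E i)] [Fact (1 ≤ p)] {f g : lp E p}
    {c : ℝ} (hc : 0 ≤ c) (h : ∀ i, ‖f i‖ ≤ c * ‖g i‖) : ‖f‖ ≤ c * ‖g‖ := by
  have hp : p ≠ 0 := (zero_lt_one.trans_le (Fact.out : 1 ≤ p)).ne'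
  calc ‖f‖ ≤ ‖c • g‖ := norm_mono hp fun i => by
        rw [coeFn_smul, Pi.smul_apply, norm_smul, Real.norm_of_nonneg hc]; exact h i
    _ = c * ‖g‖ := by rw [norm_smul, Real.norm_of_nonneg hc]

theorem tendsto_of_tendsto_pi_of_norm_sub_le [Fact (1 ≤ p)] (hp : p ≠ ∞) {ι : Type*}
    {l : Filter ι} {F : ι → lp E p} {f g : lp E p} (hF : ∀ i, Tendsto (fun n => F n i) l (𝓝 (f i)))
    (hbound : ∀ᶠ n in l, ∀ i, ‖F n i - f i‖ ≤ ‖g i‖) : Tendsto F l (𝓝 f) := by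
  have hp0 : 0 < p.toReal :=
    ENNReal.toReal_pos (zero_lt_one.trans_le (Fact.out : 1 ≤ p)).ne' hp
  have hsum : Tendsto (fun n => ‖F n - f‖ ^ p.toReal) l (𝓝 0) := by
    simp_rw [norm_rpow_eq_tsum hp0, coeFn_sub, Pi.sub_apply]
    rw [← tsum_zero]
    refine tendsto_tsum_of_dominated_convergence ((lp.memℓp g).summable hp0) (fun i => ?_) ?_
    · simpa [Real.zero_rpow hp0.ne'] using
        (((hF i).sub_const (f i)).norm.rpow_const (Or.inr hp0.le))
    · filter_upwards [hbound] with n hn i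
      rw [Real.norm_of_nonneg (by positivity)]
      exact Real.rpow_le_rpow (norm_nonneg _) (hn i) hp0.le
  rw [tendsto_iff_norm_sub_tendsto_zero]
  have hroot := (Real.continuousAt_rpow_const 0 p.toReal⁻¹ (Or.inr (by positivity))).tendsto
  rw [Real.zero_rpow (inv_pos.2 hp0).ne'] at hroot
  refine (hroot.comp hsum).congr fun n => ?_
  exact Real.rpow_rpow_inv (norm_nonneg _) hp0.ne'

end lp

theorem exp_neg_mul_le_one {l τ : ℝ} (hl : 0 ≤ l) (hτ : 0 ≤ τ) : exp (-(l * τ)) ≤ 1 :=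
  exp_le_one_iff.2 (neg_nonpos.2 (mul_nonneg hl hτ))

theorem one_sub_exp_neg_le_rpow_s13 {θ x : ℝ} (hθ₀ : 0 ≤ θ) (hθ₁ : θ ≤ 1) (hx : 0 ≤ x) :
    1 - exp (-x) ≤ x ^ θ := by
  rcases le_total x 1 with hx1 | hx1
  · calc 1 - exp (-x) ≤ x := by linarith [add_one_le_exp (-x)]
      _ ≤ x ^ θ := self_le_rpow_of_le_one hx hx1 hθ₁
  · calc 1 - exp (-x) ≤ 1 := by linarith [exp_nonneg (-x)]
      _ ≤ x ^ θ := one_le_rpow hx1 hθ₀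

theorem rpow_mul_exp_neg_le_one {θ y : ℝ} (hθ₀ : 0 ≤ θ) (hθ₁ : θ ≤ 1) (hy : 0 ≤ y) :
    y ^ θ * exp (-y) ≤ 1 := by
  have hpow : y ^ θ ≤ 1 + y := by
    rcases le_total y 1 with hy1 | hy1
    · linarith [rpow_le_one hy hy1 hθ₀]
    · linarith [rpow_le_self_of_one_le hy1 hθ₁]
  calc y ^ θ * exp (-y) ≤ (1 + y) * exp (-y) := by gcongr
    _ ≤ exp y * exp (-y) := by gcongr; linarith [add_one_le_exp y]
    _ = 1 := by rw [← exp_add, add_neg_cancel, exp_zero]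

theorem exp_neg_mul_sub_exp_neg_mul_le_s13 {θ l a b : ℝ} (hθ₀ : 0 ≤ θ) (hθ₁ : θ ≤ 1) (hl : 0 ≤ l)
    (hb : 0 < b) (hba : b ≤ a) :
    exp (-(l * b)) - exp (-(l * a)) ≤ (a - b) ^ θ * b ^ (-θ) := by
  have hab : 0 ≤ a - b := sub_nonneg.2 hba
  calc exp (-(l * b)) - exp (-(l * a)) = exp (-(l * b)) * (1 - exp (-(l * (a - b)))) := by
        rw [mul_one_sub, ← exp_add]; ring_nf
    _ ≤ exp (-(l * b)) * (l * (a - b)) ^ θ := by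
        gcongr; exact one_sub_exp_neg_le_rpow_s13 hθ₀ hθ₁ (by positivity)
    _ = ((l * b) ^ θ * exp (-(l * b))) * ((a - b) ^ θ * b ^ (-θ)) := by
        rw [mul_rpow hl hab, mul_rpow hl hb.le, rpow_neg hb.le]
        field_simp
    _ ≤ (a - b) ^ θ * b ^ (-θ) := by
        refine mul_le_of_le_one_left (by positivity) ?_
        exact rpow_mul_exp_neg_le_one hθ₀ hθ₁ (by positivity)

namespace IsDiagonalSemigroup

variable {lam : ℕ → ℝ} {S : ℝ → Hsp → Hsp} (hS : IsDiagonalSemigroup lam S)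
include hS

theorem map_sub {t : ℝ} (ht : 0 ≤ t) (x y : Hsp) : S t (x - y) = S t x - S t y := by
  ext k
  simp only [lp.coeFn_sub, Pi.sub_apply, hS t ht]
  ring

variable (hlam : ∀ k, 0 ≤ lam k)
include hlam

theorem norm_apply_le_s13 {t : ℝ} (ht : 0 ≤ t) (x : Hsp) : ‖S t x‖ ≤ ‖x‖ := by
  simpa using lp.norm_le_mul_of_forall_norm_le (f := S t x) (g := x) zero_le_one fun k => by
    rw [hS t ht, norm_mul, Real.norm_of_nonneg (exp_nonneg _), one_mul]
    exact mul_le_of_le_one_left (norm_nonneg _) (exp_neg_mul_le_one (hlam k) ht)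

theorem lipschitzWith {t : ℝ} (ht : 0 ≤ t) : LipschitzWith 1 (S t) :=
  LipschitzWith.of_dist_le_mul fun x y => by
    simpa [dist_eq_norm, ← hS.map_sub ht] using hS.norm_apply_le_s13 hlam ht (x - y)

theorem norm_sub_le {θ a b : ℝ} (hθ₀ : 0 ≤ θ) (hθ₁ : θ ≤ 1) (hb : 0 < b) (hba : b ≤ a)
    (x : Hsp) : ‖S a x - S b x‖ ≤ (a - b) ^ θ * b ^ (-θ) * ‖x‖ := by
  refine lp.norm_le_mul_of_forall_norm_le (by positivity) fun k => ?_
  rw [lp.coeFn_sub, Pi.sub_apply, hS a (hb.le.trans hba), hS b hb.le, ← sub_mul, norm_mul,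
    Real.norm_eq_abs, abs_sub_comm, abs_of_nonneg]
  · gcongr
    exact exp_neg_mul_sub_exp_neg_mul_le_s13 hθ₀ hθ₁ (hlam k) hb hba
  · rw [sub_nonneg]; gcongr; exact hlam k

theorem continuousOn_apply_s13 (x : Hsp) : ContinuousOn (fun τ => S τ x) (Ici 0) := by
  intro τ₀ (hτ₀ : 0 ≤ τ₀)
  refine lp.tendsto_of_tendsto_pi_of_norm_sub_le (g := x) ENNReal.ofNat_ne_top (fun k => ?_) ?_
  · have hcont : Continuous fun τ => exp (-(lam k * τ)) * x k := by fun_prop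
    rw [hS τ₀ hτ₀]
    refine (hcont.tendsto τ₀).mono_left nhdsWithin_le_nhds |>.congr' ?_
    filter_upwards [self_mem_nhdsWithin] with τ hτ
    rw [hS τ hτ]
  · filter_upwards [self_mem_nhdsWithin] with τ (hτ : 0 ≤ τ) k
    rw [hS τ hτ, hS τ₀ hτ₀, ← sub_mul, norm_mul]
    refine mul_le_of_le_one_left (norm_nonneg _) ?_
    exact abs_sub_le_of_nonneg_of_le (exp_nonneg _) (exp_neg_mul_le_one (hlam k) hτ)
      (exp_nonneg _) (exp_neg_mul_le_one (hlam k) hτ₀)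

theorem continuousOn_apply_comp {s : Set ℝ} {f : ℝ → ℝ} {g : ℝ → Hsp} (hf : ContinuousOn f s)
    (hfs : MapsTo f s (Ici 0)) (hg : ContinuousOn g s) :
    ContinuousOn (fun u => S (f u) (g u)) s := by
  have hjoint : ContinuousOn (fun p : Hsp × ℝ => S p.2 p.1) (univ ×ˢ Ici 0) :=
    continuousOn_prod_of_continuousOn_lipschitzOnWith _ 1
      (fun x _ => hS.continuousOn_apply_s13 hlam x)
      (fun _ hτ => (hS.lipschitzWith hlam hτ).lipschitzOnWith)
  exact hjoint.comp (hg.prodMk hf) fun u hu => ⟨mem_univ _, hfs hu⟩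

theorem intervalIntegrable_apply_sub_s13 {g : ℝ → Hsp} (hg : ContinuousOn g (Ici 0)) {a b c : ℝ}
    (ha : 0 ≤ a) (hab : a ≤ b) (hbc : b ≤ c) :
    IntervalIntegrable (fun u => S (c - u) (g u)) volume a b := by
  refine ContinuousOn.intervalIntegrable ?_
  rw [uIcc_of_le hab]
  exact hS.continuousOn_apply_comp hlam (continuousOn_const.sub continuousOn_id)
    (fun u hu => sub_nonneg.2 (hu.2.trans hbc)) (hg.mono fun u hu => ha.trans hu.1)

theorem norm_integral_apply_sub_sub_le {g : ℝ → Hsp} {B r s t : ℝ} (hr₀ : 0 < r) (hr₁ : r < 1)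
    (hs : 0 ≤ s) (hst : s ≤ t) (hB : ∀ u ∈ Icc 0 s, ‖g u‖ ≤ B) :
    ‖∫ u in (0 : ℝ)..s, (S (t - u) (g u) - S (s - u) (g u))‖
      ≤ B * (t - s) ^ (1 - r) * (s ^ r / r) := by
  have hB₀ : 0 ≤ B := (norm_nonneg _).trans (hB 0 ⟨le_rfl, hs⟩)
  -- At `u = s` the bound below is the junk value `0 ^ (-(1 - r)) = 0`, so `s` is discarded.
  have hne : ∀ᵐ u : ℝ, u ∉ ({s} : Set ℝ) := measure_eq_zero_iff_ae_notMem.1 (measure_singleton s)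
  calc ‖∫ u in (0 : ℝ)..s, (S (t - u) (g u) - S (s - u) (g u))‖
      ≤ ∫ u in (0 : ℝ)..s, B * (t - s) ^ (1 - r) * (s - u) ^ (-(1 - r)) := by
        refine intervalIntegral.norm_integral_le_of_norm_le hs ?_ ?_
        · filter_upwards [hne] with u (hus : u ≠ s) ⟨hu₀, hu₁⟩
          have key := hS.norm_sub_le hlam (θ := 1 - r) (by linarith) (by linarith)
            (sub_pos.2 (lt_of_le_of_ne hu₁ hus)) (sub_le_sub_right hst u) (g u)
          rw [sub_sub_sub_cancel_right] at key
          calc _ ≤ (t - s) ^ (1 - r) * (s - u) ^ (-(1 - r)) * ‖g u‖ := key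
            _ ≤ (t - s) ^ (1 - r) * (s - u) ^ (-(1 - r)) * B :=
                mul_le_mul_of_nonneg_left (hB u ⟨hu₀.le, hu₁⟩) <|
                  mul_nonneg (rpow_nonneg (by linarith) _) (rpow_nonneg (by linarith) _)
            _ = B * (t - s) ^ (1 - r) * (s - u) ^ (-(1 - r)) := by ring
        · refine IntervalIntegrable.const_mul ?_ _
          simpa using ((intervalIntegral.intervalIntegrable_rpow' (a := 0) (b := s)
            (r := -(1 - r)) (by linarith)).comp_sub_left s).symm
    _ = B * (t - s) ^ (1 - r) * (s ^ r / r) := by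
        rw [intervalIntegral.integral_const_mul, intervalIntegral.integral_comp_sub_left
          (fun v => v ^ (-(1 - r))), integral_rpow (Or.inl (by linarith)), sub_self, sub_zero,
          neg_sub, sub_add_cancel, zero_rpow hr₀.ne', sub_zero]

end IsDiagonalSemigroup

theorem add_mul_gronwallBound_zero (K a x : ℝ) :
    a + K * gronwallBound 0 K a x = a * exp (K * x) := by
  rcases eq_or_ne K 0 with rfl | hK
  · simp
  · rw [gronwallBound_of_K_ne_0 hK]
    field_simp
    ring

theorem le_mul_exp_of_le_add_mul_integral {u : ℝ → ℝ} {a K : ℝ} (hK : 0 ≤ K)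
    (hu : ContinuousOn u (Ici 0)) (h : ∀ τ, 0 ≤ τ → u τ ≤ a + K * ∫ v in (0 : ℝ)..τ, u v)
    {τ : ℝ} (hτ : 0 ≤ τ) : u τ ≤ a * exp (K * τ) := by
  set G : ℝ → ℝ := fun x => ∫ v in (0 : ℝ)..x, u v
  have hint : IntervalIntegrable u volume 0 τ :=
    (hu.mono (by rw [uIcc_of_le hτ]; exact Icc_subset_Ici_self)).intervalIntegrable
  have hGcont : ContinuousOn G (Icc 0 τ) := by
    simpa only [uIcc_of_le hτ] using
      intervalIntegral.continuousOn_primitive_interval' hint left_mem_uIcc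
  have hGderiv : ∀ x ∈ Ico 0 τ, HasDerivWithinAt G (u x) (Ici x) x := fun x hx =>
    intervalIntegral.integral_hasDerivWithinAt_right
      (hu.mono (by rw [uIcc_of_le hx.1]; exact Icc_subset_Ici_self)).intervalIntegrable
      ((hu.mono fun y hy => hx.1.trans (le_of_lt hy)).stronglyMeasurableAtFilter_nhdsWithin
        measurableSet_Ioi x)
      ((hu.continuousWithinAt hx.1).mono fun y hy => hx.1.trans (le_of_lt hy))
  have hGbound : G τ ≤ gronwallBound 0 K a τ := by
    simpa using le_gronwallBound_of_liminf_deriv_right_le hGcont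
      (fun x hx _ hr => (hGderiv x hx).liminf_right_slope_le hr) (by simp [G])
      (fun x hx => by linarith [h x hx.1]) τ ⟨hτ, le_rfl⟩
  calc u τ ≤ a + K * G τ := h τ hτ
    _ ≤ a + K * gronwallBound 0 K a τ := by gcongr
    _ = a * exp (K * τ) := add_mul_gronwallBound_zero K a τ

def IsMildSolution (S : ℝ → Hsp → Hsp) (h : Hsp) (g η : ℝ → Hsp) : Prop :=
  ∀ t : ℝ, 0 ≤ t → η t = S t h + ∫ u in (0 : ℝ)..t, S (t - u) (g u)

namespace IsMildSolution

variable {lam : ℕ → ℝ} {S : ℝ → Hsp → Hsp} {h : Hsp} {g η : ℝ → Hsp}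
  (hη : IsMildSolution S h g η) (hS : IsDiagonalSemigroup lam S) (hlam : ∀ k, 0 ≤ lam k)
include hη hS hlam

theorem norm_le_mul_exp {K : ℝ} (hK : 0 ≤ K) (hηc : ContinuousOn η (Ici 0))
    (hgη : ∀ u, 0 ≤ u → ‖g u‖ ≤ K * ‖η u‖) {t : ℝ} (ht : 0 ≤ t) :
    ‖η t‖ ≤ ‖h‖ * exp (K * t) := by
  refine le_mul_exp_of_le_add_mul_integral hK hηc.norm (fun τ hτ => ?_) ht
  have hint : IntervalIntegrable (fun u => K * ‖η u‖) volume 0 τ :=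
    ((hηc.mono (by rw [uIcc_of_le hτ]; exact Icc_subset_Ici_self)).norm.intervalIntegrable).const_mul
      K
  rw [hη τ hτ, ← intervalIntegral.integral_const_mul]
  refine (norm_add_le _ _).trans (add_le_add (hS.norm_apply_le_s13 hlam hτ h) ?_)
  refine intervalIntegral.norm_integral_le_of_norm_le hτ (ae_of_all _ fun u hu => ?_) hint
  exact (hS.norm_apply_le_s13 hlam (sub_nonneg.2 hu.2) _).trans (hgη u hu.1.le)

theorem sub_eq (hg : ContinuousOn g (Ici 0)) {s t : ℝ} (hs : 0 ≤ s) (hst : s ≤ t) :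
    η t - η s = (S t h - S s h) + (∫ u in (0 : ℝ)..s, (S (t - u) (g u) - S (s - u) (g u)))
      + ∫ u in s..t, S (t - u) (g u) := by
  have hint₁ := hS.intervalIntegrable_apply_sub_s13 hlam hg le_rfl hs hst
  rw [hη t (hs.trans hst), hη s hs, ← intervalIntegral.integral_add_adjacent_intervals hint₁
      (hS.intervalIntegrable_apply_sub_s13 hlam hg hs hst le_rfl),
    intervalIntegral.integral_sub hint₁
      (hS.intervalIntegrable_apply_sub_s13 hlam hg le_rfl hs le_rfl)]
  abel

theorem norm_sub_le (hg : ContinuousOn g (Ici 0)) {B r s t : ℝ} (hr₀ : 0 < r) (hr₁ : r < 1)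
    (hs : 0 < s) (hst : s ≤ t) (hB : ∀ u ∈ Icc 0 t, ‖g u‖ ≤ B) :
    ‖η t - η s‖ ≤ (t - s) ^ (1 - r) * s ^ (-(1 - r)) * ‖h‖
      + B * (t - s) ^ (1 - r) * (s ^ r / r) + B * (t - s) := by
  have hfree : ‖S t h - S s h‖ ≤ (t - s) ^ (1 - r) * s ^ (-(1 - r)) * ‖h‖ :=
    hS.norm_sub_le hlam (by linarith) (by linarith) hs hst h
  have hpast := hS.norm_integral_apply_sub_sub_le hlam hr₀ hr₁ hs.le hst
    fun u hu => hB u ⟨hu.1, hu.2.trans hst⟩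
  have hrecent : ‖∫ u in s..t, S (t - u) (g u)‖ ≤ B * (t - s) := by
    rw [← abs_of_nonneg (sub_nonneg.2 hst)]
    refine intervalIntegral.norm_integral_le_of_norm_le_const fun u hu => ?_
    rw [uIoc_of_le hst] at hu
    exact (hS.norm_apply_le_s13 hlam (sub_nonneg.2 hu.2) _).trans (hB u ⟨hs.le.trans hu.1.le, hu.2⟩)
  rw [hη.sub_eq hS hlam hg hs.le hst]
  exact (norm_add₃_le).trans (add_le_add (add_le_add hfree hpast) hrecent)

end IsMildSolution

theorem le_rpow_one_sub_mul_rpow {r x T : ℝ} (hr : 0 ≤ r) (hx : 0 ≤ x) (hxT : x ≤ T) :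
    x ≤ x ^ (1 - r) * T ^ r :=
  calc x = x ^ (1 - r) * x ^ r := by rw [← rpow_add' hx (by norm_num), sub_add_cancel, rpow_one]
    _ ≤ x ^ (1 - r) * T ^ r := by gcongr

/-- Proposition B.5: time-Hölder regularity of the first variation `η` of the averaged
flow, solving `η(t) = S(t)h + ∫₀ᵗ S(t−s) Φ(s)(η(s)) ds`:
`‖η(t) − η(s)‖ ≤ C (t−s)^{1−r} (1 + s^{-(1−r)}) ‖h‖` for `0 < s ≤ t ≤ T`,
`C` depending only on `T`, `r`, `K`, `λ₀`. -/
theorem stmt13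
    (lam : ℕ → ℝ) (lam0 : ℝ) (hlam0 : 0 < lam0) (hlam : ∀ k, lam0 ≤ lam k)
    (S : ℝ → Hsp → Hsp)
    (hS : ∀ t : ℝ, 0 ≤ t → ∀ (x : Hsp) (k : ℕ), S t x k = Real.exp (-(lam k * t)) * x k)
    (K : ℝ) (hK : 0 ≤ K)
    (T : ℝ) (hT : 0 < T) (r : ℝ) (hr : r ∈ Set.Ioo (0:ℝ) 1) :
    ∃ C > 0, ∀ Φ : ℝ → Hsp →L[ℝ] Hsp, (∀ s : ℝ, 0 ≤ s → ‖Φ s‖ ≤ K) →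
      ∀ h : Hsp, ∀ η : ℝ → Hsp,
      ContinuousOn η (Set.Ici 0) →
      ContinuousOn (fun s => Φ s (η s)) (Set.Ici 0) →
      (∀ t : ℝ, 0 ≤ t → η t = S t h + ∫ s in (0:ℝ)..t, S (t - s) (Φ s (η s))) →
      ∀ s t : ℝ, 0 < s → s ≤ t → t ≤ T →
        ‖η t - η s‖ ≤ C * (t - s) ^ (1 - r) * (1 + s ^ (-(1 - r))) * ‖h‖ := by
  obtain ⟨hr₀, hr₁⟩ := hr
  have hlam' : ∀ k, 0 ≤ lam k := fun k => hlam0.le.trans (hlam k)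
  set c := K * exp (K * T) * T ^ r * (1 / r + 1)
  refine ⟨1 + c, by positivity, fun Φ hΦ h η hηc hg hη s t hs hst htT => ?_⟩
  have hmild : IsMildSolution S h (fun u => Φ u (η u)) η := hη
  have hgη : ∀ u, 0 ≤ u → ‖Φ u (η u)‖ ≤ K * ‖η u‖ := fun u hu =>
    (Φ u).le_of_opNorm_le (hΦ u hu) (η u)
  set B := K * (‖h‖ * exp (K * T))
  have hB : ∀ u ∈ Icc 0 t, ‖Φ u (η u)‖ ≤ B := fun u hu =>
    (hgη u hu.1).trans <| mul_le_mul_of_nonneg_left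
      ((hmild.norm_le_mul_exp hS hlam' hK hηc hgη hu.1).trans (by gcongr; linarith [hu.2])) hK
  calc ‖η t - η s‖
      ≤ (t - s) ^ (1 - r) * s ^ (-(1 - r)) * ‖h‖ + B * (t - s) ^ (1 - r) * (s ^ r / r)
          + B * (t - s) :=
        hmild.norm_sub_le hS hlam' hg hr₀ hr₁ hs hst hB
    _ ≤ (t - s) ^ (1 - r) * s ^ (-(1 - r)) * ‖h‖ + B * (t - s) ^ (1 - r) * (T ^ r / r)
          + B * ((t - s) ^ (1 - r) * T ^ r) := by
        gcongr
        · linarith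
        · exact le_rpow_one_sub_mul_rpow hr₀.le (sub_nonneg.2 hst) (by linarith)
    _ = (1 + c) * (t - s) ^ (1 - r) * (1 + s ^ (-(1 - r))) * ‖h‖
          - (t - s) ^ (1 - r) * ‖h‖ * (1 + c * s ^ (-(1 - r))) := by ring
    _ ≤ (1 + c) * (t - s) ^ (1 - r) * (1 + s ^ (-(1 - r))) * ‖h‖ :=
        sub_le_self _ (by positivity)

end
end

section
/- Let K, K' ≥ 0, a ∈ (0,1/2), and h, k ∈ H. Let Φ : [0,∞) → L(H) be a family of bounded linear operators on H with ‖Φ(s)‖ ≤ K for all s, and let g : (0,∞) → H be continuous with ‖g(s)‖ ≤ K' (1 + s^{-a}) ‖h‖ ‖k‖ for all s > 0. Let ξ : [0,∞) → H be continuous with ξ(0) = 0, s ↦ Φ(s)(ξ(s)) continuous, and ξ(t) = ∫₀^t S(t−s) (Φ(s)(ξ(s)) + g(s)) ds for all t ≥ 0. Then for every T > 0 there exists a constant C (depending only on T, a, K, K' and λ₀) such that ‖ξ(t)‖ ≤ C ‖h‖ ‖k‖ for all t ∈ [0,T]. -/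
/-!
The diagonal semigroup is a contraction, so the mild equation gives
`‖ξ t‖ ≤ K ∫₀ᵗ ‖ξ‖ + K' ‖h‖ ‖k‖ ∫₀ᵀ (1 + s^{-a}) ds`, where the last integral is finite
because `a < 1`. Grönwall's inequality in integral form then bounds `‖ξ t‖` by
`K' ‖h‖ ‖k‖ e^{KT} ∫₀ᵀ (1 + s^{-a}) ds`.
-/

open Real MeasureTheory Set Filter
open scoped ENNReal Topology

noncomputable section

theorem lp.norm_le_of_apply_eq_exp_mul {ι : Type*} {p : ℝ≥0∞} (hp : p ≠ 0) {lam : ι → ℝ}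
    (hlam : ∀ k, 0 ≤ lam k) {t : ℝ} (ht : 0 ≤ t) {x y : lp (fun _ : ι => ℝ) p}
    (hy : ∀ k, y k = exp (-(lam k * t)) * x k) : ‖y‖ ≤ ‖x‖ :=
  lp.norm_mono hp fun k => by
    rw [hy k, norm_mul, norm_of_nonneg (exp_pos _).le]
    exact mul_le_of_le_one_left (norm_nonneg _)
      (exp_le_one_iff.2 (neg_nonpos.2 (mul_nonneg (hlam k) ht)))

theorem gronwallBound_zero_mul_add (K D x : ℝ) :
    K * gronwallBound 0 K D x + D = D * exp (K * x) := by
  rcases eq_or_ne K 0 with rfl | hK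
  · simp
  · rw [gronwallBound_of_K_ne_0 hK]
    field_simp
    ring

/-- Grönwall's inequality in integral form. -/
theorem le_mul_exp_of_le_mul_integral_add {u : ℝ → ℝ} {K D a b : ℝ} (hK : 0 ≤ K)
    (hu : ContinuousOn u (Icc a b)) (h : ∀ t ∈ Icc a b, u t ≤ K * (∫ s in a..t, u s) + D) :
    ∀ t ∈ Icc a b, u t ≤ D * exp (K * (t - a)) := by
  set v : ℝ → ℝ := fun t => ∫ s in a..t, u s
  have hv : ContinuousOn v (Icc a b) := by
    rcases le_or_gt a b with hab | hab
    · have := intervalIntegral.continuousOn_primitive_interval (a := a) (b := b) (μ := volume)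
        (by rw [uIcc_of_le hab]; exact hu.integrableOn_Icc)
      rwa [uIcc_of_le hab] at this
    · simp [Icc_eq_empty_of_lt hab]
  have hv' : ∀ x ∈ Ico a b, HasDerivWithinAt v (u x) (Ici x) x := fun x hx =>
    intervalIntegral.integral_hasDerivWithinAt_right (t := Ioi x)
      ((hu.mono (Icc_subset_Icc_right hx.2.le)).intervalIntegrable_of_Icc hx.1)
      ⟨Icc a b, Icc_mem_nhdsGT_of_mem hx, hu.aestronglyMeasurable measurableSet_Icc⟩
      ((hu x (Ico_subset_Icc_self hx)).mono_of_mem_nhdsWithin (Icc_mem_nhdsGT_of_mem hx))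
  have hvbound := le_gronwallBound_of_liminf_deriv_right_le (δ := 0) (K := K) (ε := D) hv
    (fun x hx _ hr => (hv' x hx).liminf_right_slope_le hr) (by simp [v])
    (fun x hx => h x (Ico_subset_Icc_self hx))
  intro t ht
  calc u t ≤ K * v t + D := h t ht
    _ ≤ K * gronwallBound 0 K D (t - a) + D := by gcongr; exact hvbound t ht
    _ = D * exp (K * (t - a)) := gronwallBound_zero_mul_add K D (t - a)

theorem norm_integral_semigroup_le {E : Type*} [NormedAddCommGroup E] [NormedSpace ℝ E]
    {S : ℝ → E → E} (hS : ∀ r, 0 ≤ r → ∀ x, ‖S r x‖ ≤ ‖x‖) {Φ : ℝ → E →L[ℝ] E} {K : ℝ}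
    (hΦ : ∀ s, 0 ≤ s → ‖Φ s‖ ≤ K) {g : ℝ → E} {G : ℝ → ℝ} (hg : ∀ s, 0 < s → ‖g s‖ ≤ G s)
    {ξ : ℝ → E} {t : ℝ} (ht : 0 ≤ t) (hξ : ContinuousOn ξ (Icc 0 t))
    (hG : IntervalIntegrable G volume 0 t) :
    ‖∫ s in (0:ℝ)..t, S (t - s) (Φ s (ξ s) + g s)‖
      ≤ K * (∫ s in (0:ℝ)..t, ‖ξ s‖) + ∫ s in (0:ℝ)..t, G s := by
  have hξint : IntervalIntegrable (fun s => ‖ξ s‖) volume 0 t :=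
    hξ.norm.intervalIntegrable_of_Icc ht
  rw [← intervalIntegral.integral_const_mul, ← intervalIntegral.integral_add
    (hξint.const_mul K) hG]
  refine intervalIntegral.norm_integral_le_of_norm_le ht
    (Eventually.of_forall fun s hs => ?_) ((hξint.const_mul K).add hG)
  calc ‖S (t - s) (Φ s (ξ s) + g s)‖ ≤ ‖Φ s (ξ s) + g s‖ := hS _ (sub_nonneg.2 hs.2) _
    _ ≤ ‖Φ s‖ * ‖ξ s‖ + ‖g s‖ := norm_add_le_of_le ((Φ s).le_opNorm _) le_rfl
    _ ≤ K * ‖ξ s‖ + G s := by gcongr; exacts [hΦ s hs.1.le, hg s hs.1]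

/-- Proposition B.7: the second variation `ξ` of the averaged flow, solving
`ξ(t) = ∫₀ᵗ S(t−s)(Φ(s)(ξ(s)) + g(s)) ds` with `ξ(0) = 0`, `‖Φ(s)‖ ≤ K` and
`‖g(s)‖ ≤ K'(1 + s^{-a})‖h‖‖k‖` for `s > 0`, satisfies `‖ξ(t)‖ ≤ C‖h‖‖k‖` on `[0,T]`,
where `C` depends only on `T`, `a`, `K`, `K'`, `λ₀`. -/
theorem stmt15
    (lam : ℕ → ℝ) (lam0 : ℝ) (hlam0 : 0 < lam0) (hlam : ∀ k, lam0 ≤ lam k)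
    (S : ℝ → Hsp → Hsp)
    (hS : ∀ t : ℝ, 0 ≤ t → ∀ (x : Hsp) (k : ℕ), S t x k = Real.exp (-(lam k * t)) * x k)
    (K K' : ℝ) (hK : 0 ≤ K) (hK' : 0 ≤ K')
    (a : ℝ) (ha : a ∈ Set.Ioo (0:ℝ) (1/2))
    (T : ℝ) (hT : 0 < T) :
    ∃ C > 0, ∀ h k : Hsp,
      ∀ Φ : ℝ → Hsp →L[ℝ] Hsp, (∀ s : ℝ, 0 ≤ s → ‖Φ s‖ ≤ K) →
      ∀ g : ℝ → Hsp, ContinuousOn g (Set.Ioi 0) →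
      (∀ s : ℝ, 0 < s → ‖g s‖ ≤ K' * (1 + s ^ (-a)) * ‖h‖ * ‖k‖) →
      ∀ ξ : ℝ → Hsp, ContinuousOn ξ (Set.Ici 0) → ξ 0 = 0 →
      ContinuousOn (fun s => Φ s (ξ s)) (Set.Ici 0) →
      (∀ t : ℝ, 0 ≤ t → ξ t = ∫ s in (0:ℝ)..t, S (t - s) (Φ s (ξ s) + g s)) →
      ∀ t ∈ Set.Icc (0:ℝ) T, ‖ξ t‖ ≤ C * ‖h‖ * ‖k‖ := by
  have hweight : ∀ b, IntervalIntegrable (fun s : ℝ => 1 + s ^ (-a)) volume 0 b := fun b =>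
    intervalIntegrable_const.add (intervalIntegral.intervalIntegrable_rpow' (by linarith [ha.2]))
  have hweight_nonneg : ∀ s : ℝ, 0 ≤ s → 0 ≤ 1 + s ^ (-a) := fun s hs => by positivity
  set I := ∫ s in (0:ℝ)..T, (1 + s ^ (-a))
  have hI : 0 ≤ I := intervalIntegral.integral_nonneg hT.le fun s hs => hweight_nonneg s hs.1
  refine ⟨K' * I * exp (K * T) + 1, by positivity, ?_⟩
  intro h k Φ hΦ g _ hg ξ hξ _ _ hmild
  have hS_contr : ∀ r, 0 ≤ r → ∀ x, ‖S r x‖ ≤ ‖x‖ := fun r hr x =>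
    lp.norm_le_of_apply_eq_exp_mul two_ne_zero (fun k => hlam0.le.trans (hlam k)) hr (hS r hr x)
  have hint : ∀ t ∈ Icc 0 T, ‖ξ t‖ ≤ K * (∫ s in (0:ℝ)..t, ‖ξ s‖) + K' * I * ‖h‖ * ‖k‖ := by
    intro t ht
    rw [hmild t ht.1]
    refine (norm_integral_semigroup_le hS_contr hΦ hg ht.1 (hξ.mono Icc_subset_Ici_self)
      ((((hweight t).const_mul K').mul_const _).mul_const _)).trans ?_
    simp only [intervalIntegral.integral_mul_const, intervalIntegral.integral_const_mul]
    gcongr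
    exact intervalIntegral.integral_mono_interval le_rfl ht.1 ht.2
      (ae_restrict_of_forall_mem measurableSet_Ioc fun s hs => hweight_nonneg s hs.1.le)
      (hweight T)
  intro t ht
  calc ‖ξ t‖ ≤ K' * I * ‖h‖ * ‖k‖ * exp (K * (t - 0)) :=
        le_mul_exp_of_le_mul_integral_add hK (hξ.norm.mono Icc_subset_Ici_self) hint t ht
    _ ≤ K' * I * ‖h‖ * ‖k‖ * exp (K * T) := by gcongr; linarith [ht.2]
    _ ≤ (K' * I * exp (K * T) + 1) * ‖h‖ * ‖k‖ := by
        nlinarith [mul_nonneg (norm_nonneg h) (norm_nonneg k)]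

end
end

section
/- Let H be a separable real Hilbert space, ν a Borel probability measure on H, M_F, L_F, M_U, L_U ≥ 0. Let F : H × H → H be such that y ↦ F(x,y) is Borel measurable for each x, ‖F(x,y)‖ ≤ M_F for all x, y, and ‖F(x₁,y) − F(x₂,y)‖ ≤ L_F ‖x₁ − x₂‖ for all x₁, x₂, y. Let U : H × H → ℝ be such that y ↦ U(x,y) is Borel measurable for each x, |U(x,y)| ≤ M_U for all x, y, and |U(x₁,y) − U(x₂,y)| ≤ L_U ‖x₁ − x₂‖ for all x₁, x₂, y. Define Z(x) = ∫_H e^{2U(x,y)} ν(dy) and F̄(x) = Z(x)^{-1} ∫_H F(x,y) e^{2U(x,y)} ν(dy). Then Z(x) ∈ [e^{-2M_U}, e^{2M_U}] for every x, ‖F̄(x)‖ ≤ M_F for every x, and there exists a constant C (depending only on M_F, L_F, M_U, L_U) such that ‖F̄(x₁) − F̄(x₂)‖ ≤ C ‖x₁ − x₂‖ for all x₁, x₂ ∈ H. -/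
open Real MeasureTheory Set Filter
open scoped ENNReal Topology

noncomputable section

/-- Local Lipschitz estimate for `exp` : if `a, b ≤ M` then
`|exp a - exp b| ≤ exp M * |a - b|`. -/
lemma exp_lip_aux {M a b : ℝ} (ha : a ≤ M) (hb : b ≤ M) :
    |Real.exp a - Real.exp b| ≤ Real.exp M * |a - b| := by
  wlog h : b ≤ a generalizing a b
  · rw [abs_sub_comm, abs_sub_comm a b]
    exact this hb ha (le_of_not_ge h)
  rw [abs_of_nonneg (sub_nonneg.2 (Real.exp_le_exp.2 h)),
    abs_of_nonneg (sub_nonneg.2 h)]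
  have h1 : Real.exp b = Real.exp a * Real.exp (b - a) := by
    rw [← Real.exp_add]; ring_nf
  nlinarith [Real.add_one_le_exp (b - a), Real.exp_pos a,
    Real.exp_le_exp.2 ha, sub_nonneg.2 h, Real.exp_pos (b - a)]

/-- Proposition 2.14 (boundedness and Lipschitz continuity of the averaged coefficient):
with `Z(x) = ∫ e^{2U(x,y)} ν(dy)` and `F̄(x) = Z(x)⁻¹ ∫ F(x,y) e^{2U(x,y)} ν(dy)`,
one has `Z(x) ∈ [e^{-2M_U}, e^{2M_U}]`, `‖F̄(x)‖ ≤ M_F`, and `F̄` is Lipschitz with a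
constant depending only on `M_F`, `L_F`, `M_U`, `L_U`. -/
theorem stmt16
    {E : Type*} [NormedAddCommGroup E] [InnerProductSpace ℝ E] [CompleteSpace E]
    [TopologicalSpace.SeparableSpace E] [MeasurableSpace E] [BorelSpace E]
    (ν : Measure E) [IsProbabilityMeasure ν]
    (MF LF MU LU : ℝ) (hMF : 0 ≤ MF) (hLF : 0 ≤ LF) (hMU : 0 ≤ MU) (hLU : 0 ≤ LU) :
    ∃ C > 0, ∀ (F : E → E → E) (U : E → E → ℝ),
      (∀ x : E, Measurable (F x)) →
      (∀ x y : E, ‖F x y‖ ≤ MF) →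
      (∀ x₁ x₂ y : E, ‖F x₁ y - F x₂ y‖ ≤ LF * ‖x₁ - x₂‖) →
      (∀ x : E, Measurable (U x)) →
      (∀ x y : E, |U x y| ≤ MU) →
      (∀ x₁ x₂ y : E, |U x₁ y - U x₂ y| ≤ LU * ‖x₁ - x₂‖) →
      (∀ x : E,
        (∫ y, Real.exp (2 * U x y) ∂ν) ∈
          Set.Icc (Real.exp (-(2 * MU))) (Real.exp (2 * MU))) ∧
      (∀ x : E,
        ‖(∫ y, Real.exp (2 * U x y) ∂ν)⁻¹ • ∫ y, Real.exp (2 * U x y) • F x y ∂ν‖ ≤ MF) ∧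
      (∀ x₁ x₂ : E,
        ‖((∫ y, Real.exp (2 * U x₁ y) ∂ν)⁻¹ • ∫ y, Real.exp (2 * U x₁ y) • F x₁ y ∂ν) -
            ((∫ y, Real.exp (2 * U x₂ y) ∂ν)⁻¹ • ∫ y, Real.exp (2 * U x₂ y) • F x₂ y ∂ν)‖
          ≤ C * ‖x₁ - x₂‖) := by
  set eM : ℝ := Real.exp (2 * MU) with heM
  have heMpos : 0 < eM := Real.exp_pos _
  refine ⟨eM ^ 2 * (eM * (LF + 2 * LU * MF)) + (2 * LU * eM * (eM ^ 2 * (MF * eM))) + 1,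
    by positivity, ?_⟩
  intro F U hFmeas hFb hFlip hUmeas hUb hUlip
  have hexp_pos : ∀ x y : E, 0 < Real.exp (2 * U x y) := fun x y => Real.exp_pos _
  have hUb' : ∀ x y : E, 2 * U x y ≤ 2 * MU := fun x y => by
    nlinarith [abs_le.1 (hUb x y)]
  have hexp_b : ∀ x y : E, Real.exp (2 * U x y) ≤ eM := fun x y =>
    Real.exp_le_exp.2 (hUb' x y)
  have hexp_lb : ∀ x y : E, Real.exp (-(2 * MU)) ≤ Real.exp (2 * U x y) := fun x y =>
    Real.exp_le_exp.2 (by nlinarith [abs_le.1 (hUb x y)])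
  have hmeas_e : ∀ x : E, Measurable (fun y => Real.exp (2 * U x y)) := fun x =>
    Real.measurable_exp.comp ((hUmeas x).const_mul 2)
  have hint_e : ∀ x : E, Integrable (fun y => Real.exp (2 * U x y)) ν := fun x =>
    (integrable_const eM).mono' (hmeas_e x).aestronglyMeasurable
      (Filter.Eventually.of_forall fun y => by
        rw [Real.norm_eq_abs, abs_of_pos (hexp_pos x y)]; exact hexp_b x y)
  have hint_eF : ∀ x : E, Integrable (fun y => Real.exp (2 * U x y) • F x y) ν := fun x =>
    (integrable_const (eM * MF)).mono'
      ((hmeas_e x).aestronglyMeasurable.smul (hFmeas x).aestronglyMeasurable)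
      (Filter.Eventually.of_forall fun y => by
        rw [norm_smul, Real.norm_eq_abs, abs_of_pos (hexp_pos x y)]
        exact mul_le_mul (hexp_b x y) (hFb x y) (norm_nonneg _) heMpos.le)
  set Z : E → ℝ := fun x => ∫ y, Real.exp (2 * U x y) ∂ν with hZ
  set I : E → E := fun x => ∫ y, Real.exp (2 * U x y) • F x y ∂ν with hI
  -- bounds on Z
  have hZmem : ∀ x : E, Z x ∈ Set.Icc (Real.exp (-(2 * MU))) eM := fun x => by
    constructor
    · calc Real.exp (-(2 * MU)) = ∫ _y, Real.exp (-(2 * MU)) ∂ν := by simp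
        _ ≤ Z x := integral_mono (integrable_const _) (hint_e x) (hexp_lb x)
    · calc Z x ≤ ∫ _y, eM ∂ν := integral_mono (hint_e x) (integrable_const _) (hexp_b x)
        _ = eM := by simp
  have hZpos : ∀ x : E, 0 < Z x := fun x =>
    lt_of_lt_of_le (Real.exp_pos _) (hZmem x).1
  have hZinv : ∀ x : E, (Z x)⁻¹ ≤ eM := fun x => by
    have h1 : eM⁻¹ ≤ Z x := by
      rw [heM, ← Real.exp_neg]; exact (hZmem x).1
    calc (Z x)⁻¹ ≤ (eM⁻¹)⁻¹ := by
          apply inv_anti₀ (by positivity) h1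
      _ = eM := inv_inv eM
  -- bound on I
  have hInorm : ∀ x : E, ‖I x‖ ≤ MF * Z x := fun x => by
    calc ‖I x‖ ≤ ∫ y, ‖Real.exp (2 * U x y) • F x y‖ ∂ν :=
          norm_integral_le_integral_norm _
      _ ≤ ∫ y, MF * Real.exp (2 * U x y) ∂ν := by
          refine integral_mono (hint_eF x).norm ((hint_e x).const_mul MF) (fun y => ?_)
          rw [norm_smul, Real.norm_eq_abs, abs_of_pos (hexp_pos x y), mul_comm]
          exact mul_le_mul_of_nonneg_right (hFb x y) (hexp_pos x y).le
      _ = MF * Z x := integral_const_mul MF _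
  have hInorm' : ∀ x : E, ‖I x‖ ≤ MF * eM := fun x =>
    (hInorm x).trans (mul_le_mul_of_nonneg_left (hZmem x).2 hMF)
  refine ⟨fun x => by simpa [heM] using hZmem x, ?_, ?_⟩
  · intro x
    show ‖(Z x)⁻¹ • I x‖ ≤ MF
    rw [norm_smul, Real.norm_eq_abs, abs_of_pos (inv_pos.2 (hZpos x))]
    calc (Z x)⁻¹ * ‖I x‖ ≤ (Z x)⁻¹ * (MF * Z x) :=
          mul_le_mul_of_nonneg_left (hInorm x) (inv_pos.2 (hZpos x)).le
      _ = MF := by rw [mul_comm MF (Z x), ← mul_assoc, inv_mul_cancel₀ (hZpos x).ne', one_mul]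
  · intro x₁ x₂
    show ‖(Z x₁)⁻¹ • I x₁ - (Z x₂)⁻¹ • I x₂‖ ≤ _
    set d : ℝ := ‖x₁ - x₂‖ with hd
    have hd0 : 0 ≤ d := norm_nonneg _
    -- Lipschitz estimate for Z
    have hZlip : |Z x₁ - Z x₂| ≤ 2 * LU * eM * d := by
      have h1 : Z x₁ - Z x₂ =
          ∫ y, (Real.exp (2 * U x₁ y) - Real.exp (2 * U x₂ y)) ∂ν :=
        (integral_sub (hint_e x₁) (hint_e x₂)).symm
      rw [h1]
      calc |∫ y, (Real.exp (2 * U x₁ y) - Real.exp (2 * U x₂ y)) ∂ν|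
          ≤ ∫ y, |Real.exp (2 * U x₁ y) - Real.exp (2 * U x₂ y)| ∂ν :=
            by simpa [Real.norm_eq_abs] using
              norm_integral_le_integral_norm
                (fun y => Real.exp (2 * U x₁ y) - Real.exp (2 * U x₂ y))
        _ ≤ ∫ _y, 2 * LU * eM * d ∂ν := by
            refine integral_mono (((hint_e x₁).sub (hint_e x₂)).abs)
              (integrable_const _) (fun y => ?_)
            calc |Real.exp (2 * U x₁ y) - Real.exp (2 * U x₂ y)|
                ≤ eM * |2 * U x₁ y - 2 * U x₂ y| :=
                  exp_lip_aux (hUb' x₁ y) (hUb' x₂ y)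
              _ = eM * (2 * |U x₁ y - U x₂ y|) := by
                  rw [show 2 * U x₁ y - 2 * U x₂ y = 2 * (U x₁ y - U x₂ y) by ring,
                    abs_mul, abs_two]
              _ ≤ eM * (2 * (LU * d)) := by
                  have := hUlip x₁ x₂ y
                  nlinarith [heMpos]
              _ = 2 * LU * eM * d := by ring
        _ = 2 * LU * eM * d := by simp
    -- Lipschitz estimate for I
    have hIlip : ‖I x₁ - I x₂‖ ≤ eM * (LF + 2 * LU * MF) * d := by
      have h1 : I x₁ - I x₂ =
          ∫ y, (Real.exp (2 * U x₁ y) • F x₁ y - Real.exp (2 * U x₂ y) • F x₂ y) ∂ν :=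
        (integral_sub (hint_eF x₁) (hint_eF x₂)).symm
      rw [h1]
      calc ‖∫ y, (Real.exp (2 * U x₁ y) • F x₁ y - Real.exp (2 * U x₂ y) • F x₂ y) ∂ν‖
          ≤ ∫ y, ‖Real.exp (2 * U x₁ y) • F x₁ y - Real.exp (2 * U x₂ y) • F x₂ y‖ ∂ν :=
            norm_integral_le_integral_norm _
        _ ≤ ∫ _y, eM * (LF + 2 * LU * MF) * d ∂ν := by
            refine integral_mono ((hint_eF x₁).sub (hint_eF x₂)).norm
              (integrable_const _) (fun y => ?_)
            have hdecomp : Real.exp (2 * U x₁ y) • F x₁ y - Real.exp (2 * U x₂ y) • F x₂ y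
                = Real.exp (2 * U x₁ y) • (F x₁ y - F x₂ y) +
                  (Real.exp (2 * U x₁ y) - Real.exp (2 * U x₂ y)) • F x₂ y := by
              rw [smul_sub, sub_smul]; abel
            rw [hdecomp]
            calc ‖Real.exp (2 * U x₁ y) • (F x₁ y - F x₂ y) +
                  (Real.exp (2 * U x₁ y) - Real.exp (2 * U x₂ y)) • F x₂ y‖
                ≤ ‖Real.exp (2 * U x₁ y) • (F x₁ y - F x₂ y)‖ +
                  ‖(Real.exp (2 * U x₁ y) - Real.exp (2 * U x₂ y)) • F x₂ y‖ :=
                  norm_add_le _ _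
              _ ≤ eM * (LF * d) + (2 * LU * eM * d) * MF := by
                  gcongr ?_ + ?_
                  · rw [norm_smul, Real.norm_eq_abs, abs_of_pos (hexp_pos x₁ y)]
                    exact mul_le_mul (hexp_b x₁ y) (hFlip x₁ x₂ y) (norm_nonneg _) heMpos.le
                  · rw [norm_smul, Real.norm_eq_abs]
                    refine mul_le_mul ?_ (hFb x₂ y) (norm_nonneg _) (by positivity)
                    calc |Real.exp (2 * U x₁ y) - Real.exp (2 * U x₂ y)|
                        ≤ eM * |2 * U x₁ y - 2 * U x₂ y| :=
                          exp_lip_aux (hUb' x₁ y) (hUb' x₂ y)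
                      _ = eM * (2 * |U x₁ y - U x₂ y|) := by
                          rw [show 2 * U x₁ y - 2 * U x₂ y = 2 * (U x₁ y - U x₂ y) by ring,
                            abs_mul, abs_two]
                      _ ≤ eM * (2 * (LU * d)) := by
                          have := hUlip x₁ x₂ y
                          nlinarith [heMpos]
                      _ = 2 * LU * eM * d := by ring
              _ = eM * (LF + 2 * LU * MF) * d := by ring
        _ = eM * (LF + 2 * LU * MF) * d := by simp
    -- difference of inverses
    have hZinvlip : |(Z x₁)⁻¹ - (Z x₂)⁻¹| ≤ 2 * LU * eM * (eM ^ 2 * d) := by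
      have h1 : (Z x₁)⁻¹ - (Z x₂)⁻¹ = (Z x₂ - Z x₁) * ((Z x₁)⁻¹ * (Z x₂)⁻¹) := by
        rw [inv_sub_inv (hZpos x₁).ne' (hZpos x₂).ne', div_eq_mul_inv, mul_inv]
      rw [h1, abs_mul]
      have h2 : |(Z x₁)⁻¹ * (Z x₂)⁻¹| ≤ eM ^ 2 := by
        rw [abs_mul, abs_of_pos (inv_pos.2 (hZpos x₁)), abs_of_pos (inv_pos.2 (hZpos x₂)),
          sq]
        exact mul_le_mul (hZinv x₁) (hZinv x₂) (inv_pos.2 (hZpos x₂)).le heMpos.le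
      have h3 : |Z x₂ - Z x₁| ≤ 2 * LU * eM * d := by
        rw [abs_sub_comm]; exact hZlip
      calc |Z x₂ - Z x₁| * |(Z x₁)⁻¹ * (Z x₂)⁻¹|
          ≤ (2 * LU * eM * d) * eM ^ 2 :=
            mul_le_mul h3 h2 (abs_nonneg _) (by positivity)
        _ = 2 * LU * eM * (eM ^ 2 * d) := by ring
    -- assemble
    have hdecomp : (Z x₁)⁻¹ • I x₁ - (Z x₂)⁻¹ • I x₂
        = (Z x₁)⁻¹ • (I x₁ - I x₂) + ((Z x₁)⁻¹ - (Z x₂)⁻¹) • I x₂ := by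
      rw [smul_sub, sub_smul]; abel
    rw [hdecomp]
    calc ‖(Z x₁)⁻¹ • (I x₁ - I x₂) + ((Z x₁)⁻¹ - (Z x₂)⁻¹) • I x₂‖
        ≤ ‖(Z x₁)⁻¹ • (I x₁ - I x₂)‖ + ‖((Z x₁)⁻¹ - (Z x₂)⁻¹) • I x₂‖ := norm_add_le _ _
      _ ≤ eM * (eM * (LF + 2 * LU * MF) * d) +
          (2 * LU * eM * (eM ^ 2 * d)) * (MF * eM) := by
          gcongr ?_ + ?_
          · rw [norm_smul, Real.norm_eq_abs, abs_of_pos (inv_pos.2 (hZpos x₁))]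
            exact mul_le_mul (hZinv x₁) hIlip (norm_nonneg _) heMpos.le
          · rw [norm_smul, Real.norm_eq_abs]
            exact mul_le_mul hZinvlip ((hInorm' x₂).trans_eq (by ring)) (norm_nonneg _)
              (by positivity)
      _ = (eM * (eM * (LF + 2 * LU * MF)) + (2 * LU * eM * (eM ^ 2 * (MF * eM)))) * d := by
          ring
      _ ≤ (eM ^ 2 * (eM * (LF + 2 * LU * MF)) + (2 * LU * eM * (eM ^ 2 * (MF * eM))) + 1) * d := by
          have h1 : 1 ≤ eM := Real.one_le_exp (by positivity)
          have h2 : eM * (eM * (LF + 2 * LU * MF)) ≤ eM ^ 2 * (eM * (LF + 2 * LU * MF)) :=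
            mul_le_mul_of_nonneg_right
              (by nlinarith [mul_le_mul_of_nonneg_left h1 heMpos.le])
              (by positivity)
          nlinarith [mul_le_mul_of_nonneg_right h2 hd0, hd0]


end
end

section
/- Let M, K ≥ 0, β ∈ (0,1), θ ∈ (0,1], x ∈ D_θ. Let f : (0,∞) → H be continuous with ‖f(s)‖ ≤ M for all s > 0 and ‖f(t) − f(s)‖ ≤ K (t−s)^β (1 + s^{-β}) for all 0 < s < t, and define X(t) = S(t)x + ∫₀^t S(t−s) f(s) ds for t > 0 (Bochner integral in H). Then there exists a constant C (depending only on θ, β and λ₀) such that for every t > 0, X(t) ∈ D_1 and |X(t)|_1 ≤ C (1 + t^{θ−1}) (|x|_θ + M + K). -/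
open Real MeasureTheory Set Filter
open scoped ENNReal Topology

noncomputable section

/-!
Work coordinatewise. Writing `eₖ(τ) = exp (-λₖ τ)`, the mild formula gives
`λₖ Xₖ(t) = λₖ eₖ(t) xₖ + ∫₀ᵗ λₖ eₖ(t - s) (fₖ(s) - fₖ(t)) ds + (1 - eₖ(t)) fₖ(t)`.
The first term is controlled by `λ e^{-λt} ≤ t^{θ-1} λ^θ`, the last by `‖f(t)‖ ≤ M`. For the middle
one, Minkowski's inequality, `λ e^{-λτ} ≤ (2/τ) e^{-λ₀τ/2}` and the Hölder bound leave the kernel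
`(t-s)^{β-1} (e^{-λ₀(t-s)/2} + s^{-β})`, whose integral over `(0, t)` is bounded independently of
`t`. All estimates are made on finitely many coordinates at a time, in `EuclideanSpace ℝ F`, which
yields both `X(t) ∈ D_1` and the bound on `|X(t)|_1`.
-/

lemma rpow_mul_exp_neg_le_one_s17 {a p : ℝ} (ha : 0 ≤ a) (hp0 : 0 ≤ p) (hp1 : p ≤ 1) :
    a ^ p * exp (-a) ≤ 1 := by
  have hpow : a ^ p ≤ exp a := calc
    a ^ p = (1 + (a - 1)) ^ p := by ring_nf
    _ ≤ 1 + p * (a - 1) := rpow_one_add_le_one_add_mul_self (by linarith) hp0 hp1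
    _ ≤ a + 1 := by nlinarith
    _ ≤ exp a := add_one_le_exp a
  calc a ^ p * exp (-a) ≤ exp a * exp (-a) := by gcongr
    _ = 1 := by rw [← exp_add, add_neg_cancel, exp_zero]

lemma mul_exp_neg_mul_le_rpow {l t θ : ℝ} (hl : 0 < l) (ht : 0 < t) (hθ0 : 0 ≤ θ)
    (hθ1 : θ ≤ 1) : l * exp (-(l * t)) ≤ t ^ (θ - 1) * l ^ θ := by
  have key := rpow_mul_exp_neg_le_one_s17 (mul_pos hl ht).le (sub_nonneg.2 hθ1) (by linarith)
  have hsplit :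
      l * exp (-(l * t)) = t ^ (θ - 1) * l ^ θ * ((l * t) ^ (1 - θ) * exp (-(l * t))) := by
    rw [mul_rpow hl.le ht.le]
    have hl' : l ^ θ * l ^ (1 - θ) = l := by rw [← rpow_add hl]; simp
    have ht' : t ^ (θ - 1) * t ^ (1 - θ) = 1 := by rw [← rpow_add ht]; simp
    linear_combination -exp (-(l * t)) * hl' - exp (-(l * t)) * (l ^ θ * l ^ (1 - θ)) * ht'
  rw [hsplit]
  exact mul_le_of_le_one_right (by positivity) key

lemma mul_exp_neg_mul_le_of_le {l₀ l τ : ℝ} (hl : l₀ ≤ l) (hτ : 0 < τ) :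
    l * exp (-(l * τ)) ≤ 2 / τ * exp (-(l₀ / 2 * τ)) := by
  have hhalf : l * τ / 2 * exp (-(l * τ / 2)) ≤ 1 :=
    (mul_exp_neg_le_exp_neg_one _).trans (exp_le_one_iff.2 (by norm_num))
  have hdecay : exp (-(l * τ / 2)) ≤ exp (-(l₀ / 2 * τ)) := exp_le_exp.2 (by nlinarith)
  calc l * exp (-(l * τ))
      = 2 / τ * (l * τ / 2 * exp (-(l * τ / 2))) * exp (-(l * τ / 2)) := by
        rw [show exp (-(l * τ)) = exp (-(l * τ / 2)) * exp (-(l * τ / 2)) by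
          rw [← exp_add]; ring_nf]
        field_simp
    _ ≤ 2 / τ * 1 * exp (-(l₀ / 2 * τ)) := by gcongr
    _ = 2 / τ * exp (-(l₀ / 2 * τ)) := by rw [mul_one]

lemma rpow_sub_mul_rpow_neg_le {β t s : ℝ} (hβ0 : 0 ≤ β) (hβ1 : β ≤ 1) (hs : 0 < s)
    (hst : s < t) :
    (t - s) ^ (β - 1) * s ^ (-β) ≤
      (t / 2) ^ (β - 1) * s ^ (-β) + (t / 2) ^ (-β) * (t - s) ^ (β - 1) := by
  have ht : 0 < t / 2 := by linarith
  have h1 : 0 ≤ (t - s) ^ (β - 1) := rpow_nonneg (by linarith) _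
  have h2 : 0 ≤ s ^ (-β) := rpow_nonneg hs.le _
  have h3 : 0 ≤ (t / 2) ^ (β - 1) * s ^ (-β) := by positivity
  have h4 : 0 ≤ (t / 2) ^ (-β) * (t - s) ^ (β - 1) := by positivity
  rcases le_total s (t / 2) with h | h
  · have : (t - s) ^ (β - 1) ≤ (t / 2) ^ (β - 1) :=
      rpow_le_rpow_of_nonpos (by linarith) (by linarith) (by linarith)
    nlinarith
  · have : s ^ (-β) ≤ (t / 2) ^ (-β) := rpow_le_rpow_of_nonpos (by linarith) h (by linarith)
    nlinarith

lemma intervalIntegrable_and_integral_rpow_sub_mul_exp_le {a r t : ℝ} (ha : 0 < a)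
    (hr : 0 < r) (ht : 0 ≤ t) :
    IntervalIntegrable (fun s => (t - s) ^ (a - 1) * exp (-(r * (t - s)))) volume 0 t ∧
      ∫ s in 0..t, (t - s) ^ (a - 1) * exp (-(r * (t - s))) ≤ (1 / r) ^ a * Gamma a := by
  set g : ℝ → ℝ := fun u => u ^ (a - 1) * exp (-(r * u))
  have hg : IntegrableOn g (Ioi 0) :=
    (integrableOn_rpow_mul_exp_neg_mul_rpow (s := a - 1) (by linarith) one_pos hr).congr_fun
      (fun u _ => by simp [g, neg_mul]) measurableSet_Ioi
  have hgI : IntervalIntegrable g volume 0 t :=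
    (intervalIntegrable_iff_integrableOn_Ioc_of_le ht).2 (hg.mono_set Ioc_subset_Ioi_self)
  refine ⟨by simpa using (hgI.comp_sub_left t).symm, ?_⟩
  rw [intervalIntegral.integral_comp_sub_left (fun u => g u) t, sub_self, sub_zero,
    intervalIntegral.integral_of_le ht, ← integral_rpow_mul_exp_neg_mul_Ioi ha hr]
  refine setIntegral_mono_set hg ?_ Ioc_subset_Ioi_self.eventuallyLE
  filter_upwards [ae_restrict_mem measurableSet_Ioi] with u hu
  exact mul_nonneg (rpow_nonneg (le_of_lt hu) _) (exp_pos _).le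

lemma intervalIntegrable_and_integral_rpow_split_eq {β t : ℝ} (hβ0 : 0 < β) (hβ1 : β < 1)
    (ht : 0 < t) :
    IntervalIntegrable
        (fun s => (t / 2) ^ (β - 1) * s ^ (-β) + (t / 2) ^ (-β) * (t - s) ^ (β - 1)) volume 0 t ∧
      ∫ s in 0..t, ((t / 2) ^ (β - 1) * s ^ (-β) + (t / 2) ^ (-β) * (t - s) ^ (β - 1)) =
        2 ^ (1 - β) / (1 - β) + 2 ^ β / β := by
  have hI₁ : IntervalIntegrable (fun s : ℝ => s ^ (-β)) volume 0 t :=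
    intervalIntegral.intervalIntegrable_rpow' (by linarith)
  have hI₂ : IntervalIntegrable (fun s => (t - s) ^ (β - 1)) volume 0 t := by
    simpa using ((intervalIntegral.intervalIntegrable_rpow' (a := 0) (b := t)
      (by linarith : -1 < β - 1)).comp_sub_left t).symm
  refine ⟨(hI₁.const_mul _).add (hI₂.const_mul _), ?_⟩
  have e₁ : ∫ s in 0..t, s ^ (-β) = t ^ (1 - β) / (1 - β) := by
    rw [integral_rpow (Or.inl (by linarith)), zero_rpow (by linarith)]; ring_nf
  have e₂ : ∫ s in 0..t, (t - s) ^ (β - 1) = t ^ β / β := by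
    rw [intervalIntegral.integral_comp_sub_left (fun u => u ^ (β - 1)) t, sub_self, sub_zero,
      integral_rpow (Or.inl (by linarith)), zero_rpow (by linarith)]; ring_nf
  obtain ⟨m, hm, rfl⟩ : ∃ m, 0 < m ∧ t = 2 * m := ⟨t / 2, by linarith, by ring⟩
  rw [intervalIntegral.integral_add (hI₁.const_mul _) (hI₂.const_mul _),
    intervalIntegral.integral_const_mul, intervalIntegral.integral_const_mul, e₁, e₂,
    mul_div_cancel_left₀ _ two_ne_zero, mul_rpow zero_le_two hm.le, mul_rpow zero_le_two hm.le]
  have h₁ : m ^ (β - 1) * m ^ (1 - β) = 1 := by rw [← rpow_add hm]; simp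
  have h₂ : m ^ (-β) * m ^ β = 1 := by rw [← rpow_add hm]; simp
  have hβ' : 1 - β ≠ 0 := (sub_pos.2 hβ1).ne'
  field_simp
  linear_combination (2 : ℝ) ^ (1 - β) * β * h₁ + 2 ^ β * (1 - β) * h₂

def toEuclideanOn (F : Finset ℕ) (y : ℕ → ℝ) : EuclideanSpace ℝ F :=
  WithLp.toLp 2 fun k => y k

lemma norm_toEuclideanOn_sq (F : Finset ℕ) (y : ℕ → ℝ) :
    ‖toEuclideanOn F y‖ ^ 2 = ∑ k ∈ F, y k ^ 2 := by
  rw [EuclideanSpace.norm_sq_eq, ← F.sum_coe_sort (fun k => y k ^ 2)]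
  simp [toEuclideanOn]

lemma norm_toEuclideanOn_le {F : Finset ℕ} {y a : ℕ → ℝ} {P : ℝ} (hP : 0 ≤ P)
    (ha₀ : ∀ k, 0 ≤ a k) (ha : Summable a) (hy : ∀ k, y k ^ 2 ≤ P ^ 2 * a k) :
    ‖toEuclideanOn F y‖ ≤ P * √(∑' k, a k) := by
  rw [← sqrt_sq (norm_nonneg _), ← sqrt_sq hP, ← sqrt_mul (sq_nonneg _), norm_toEuclideanOn_sq]
  refine sqrt_le_sqrt ?_
  calc ∑ k ∈ F, y k ^ 2 ≤ ∑ k ∈ F, P ^ 2 * a k := Finset.sum_le_sum fun k _ => hy k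
    _ = P ^ 2 * ∑ k ∈ F, a k := (Finset.mul_sum _ _ _).symm
    _ ≤ P ^ 2 * ∑' k, a k := by gcongr; exact ha.sum_le_tsum F fun k _ => ha₀ k

lemma Hsp.summable_sq_and_norm_eq (z : Hsp) :
    Summable (fun k => z k ^ 2) ∧ ‖z‖ = √(∑' k, z k ^ 2) := by
  have h := lp.summable_inner (𝕜 := ℝ) z z
  simp only [real_inner_self_eq_norm_sq, Real.norm_eq_abs, sq_abs] at h
  refine ⟨h, ?_⟩
  rw [← sqrt_sq (norm_nonneg z), ← real_inner_self_eq_norm_sq, lp.inner_eq_tsum]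
  simp

lemma norm_toEuclideanOn_mul_le {F : Finset ℕ} {c : ℕ → ℝ} {P : ℝ} (hc : ∀ k, |c k| ≤ P)
    (z : Hsp) : ‖toEuclideanOn F (fun k => c k * z k)‖ ≤ P * ‖z‖ := by
  obtain ⟨hz, hnorm⟩ := Hsp.summable_sq_and_norm_eq z
  rw [hnorm]
  refine norm_toEuclideanOn_le ((abs_nonneg _).trans (hc 0)) (fun k => sq_nonneg _) hz
    fun k => ?_
  rw [mul_pow]
  exact mul_le_mul_of_nonneg_right (sq_le_sq' (abs_le.1 (hc k)).1 (abs_le.1 (hc k)).2)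
    (sq_nonneg _)

lemma norm_toEuclideanOn_mul_le_nrmD {F : Finset ℕ} {lam c : ℕ → ℝ} {θ P : ℝ} {x : Hsp}
    (hlam : ∀ k, 0 ≤ lam k) (hx : memD lam θ x) (hP : 0 ≤ P)
    (hc : ∀ k, |c k| ≤ P * lam k ^ θ) :
    ‖toEuclideanOn F (fun k => c k * x k)‖ ≤ P * nrmD lam θ x := by
  refine norm_toEuclideanOn_le hP (fun k => mul_nonneg (rpow_nonneg (hlam k) _) (sq_nonneg _))
    hx fun k => ?_
  rw [mul_comm 2 θ, rpow_mul (hlam k), rpow_two, ← mul_assoc, ← mul_pow, mul_pow (c k)]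
  exact mul_le_mul_of_nonneg_right (sq_le_sq' (abs_le.1 (hc k)).1 (abs_le.1 (hc k)).2)
    (sq_nonneg _)

lemma memD_one_and_nrmD_le {lam : ℕ → ℝ} {y : Hsp} {R : ℝ} (hR : 0 ≤ R)
    (h : ∀ F, ‖toEuclideanOn F (fun k => lam k * y k)‖ ≤ R) :
    memD lam 1 y ∧ nrmD lam 1 y ≤ R := by
  have hterm : ∀ k, lam k ^ (2 * (1 : ℝ)) * y k ^ 2 = (lam k * y k) ^ 2 := fun k => by
    rw [mul_one, rpow_two, mul_pow]
  have hsum : ∀ F : Finset ℕ, ∑ k ∈ F, lam k ^ (2 * (1 : ℝ)) * y k ^ 2 ≤ R ^ 2 := fun F => by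
    simp_rw [hterm, ← norm_toEuclideanOn_sq]
    exact pow_le_pow_left₀ (norm_nonneg _) (h F) 2
  have hsumm : memD lam 1 y :=
    summable_of_sum_le (fun k => by rw [hterm]; positivity) hsum
  refine ⟨hsumm, ?_⟩
  rw [nrmD, ← sqrt_sq hR]
  exact sqrt_le_sqrt (hsumm.tsum_le_of_sum_le hsum)

lemma toEuclideanOn_intervalIntegral {F : Finset ℕ} {φ : ℝ → ℕ → ℝ} {a b : ℝ}
    (hφ : ∀ k, IntervalIntegrable (fun s => φ s k) volume a b) :
    toEuclideanOn F (fun k => ∫ s in a..b, φ s k) = ∫ s in a..b, toEuclideanOn F (φ s) := by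
  have hI : IntervalIntegrable (fun s => toEuclideanOn F (φ s)) volume a b :=
    ⟨integrable_piLp_iff.2 fun k => (hφ k).1, integrable_piLp_iff.2 fun k => (hφ k).2⟩
  ext k
  exact (EuclideanSpace.proj k).intervalIntegral_comp_comm hI

lemma integral_mul_exp_neg_mul_sub (l t : ℝ) :
    ∫ s in 0..t, l * exp (-(l * (t - s))) = 1 - exp (-(l * t)) := by
  have hderiv : ∀ s ∈ uIcc 0 t,
      HasDerivAt (fun s => exp (-(l * (t - s)))) (l * exp (-(l * (t - s)))) s := fun s _ => by
    have hlin : HasDerivAt (fun s => -(l * (t - s))) l s := by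
      rw [show (fun s => -(l * (t - s))) = fun s => l * s - l * t by ext; ring]
      simpa using ((hasDerivAt_id s).const_mul l).sub_const (l * t)
    simpa [mul_comm] using hlin.exp
  rw [intervalIntegral.integral_eq_sub_of_hasDerivAt hderiv
    (Continuous.intervalIntegrable (by fun_prop) _ _)]
  simp

lemma mul_integral_exp_neg_mul_eq {l t : ℝ} {φ : ℝ → ℝ}
    (hφ : IntervalIntegrable (fun s => exp (-(l * (t - s))) * φ s) volume 0 t) :
    l * ∫ s in 0..t, exp (-(l * (t - s))) * φ s =
      (∫ s in 0..t, l * exp (-(l * (t - s))) * (φ s - φ t)) + (1 - exp (-(l * t))) * φ t := by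
  have hsplit : (fun s => l * exp (-(l * (t - s))) * (φ s - φ t)) =
      fun s => l * (exp (-(l * (t - s))) * φ s) - l * exp (-(l * (t - s))) * φ t := by
    ext s; ring
  rw [hsplit, intervalIntegral.integral_sub (hφ.const_mul l)
    (Continuous.intervalIntegrable (by fun_prop) _ _),
    intervalIntegral.integral_const_mul, intervalIntegral.integral_mul_const,
    integral_mul_exp_neg_mul_sub]
  ring

lemma apply_intervalIntegral_semigroup {lam : ℕ → ℝ} {S : ℝ → Hsp → Hsp}
    (hS : ∀ t : ℝ, 0 ≤ t → ∀ (x : Hsp) (k : ℕ), S t x k = exp (-(lam k * t)) * x k)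
    {f : ℝ → Hsp} {t : ℝ} (ht : 0 ≤ t)
    (hG : IntervalIntegrable (fun s => S (t - s) (f s)) volume 0 t) (k : ℕ) :
    IntervalIntegrable (fun s => exp (-(lam k * (t - s))) * f s k) volume 0 t ∧
      (∫ s in 0..t, S (t - s) (f s)) k = ∫ s in 0..t, exp (-(lam k * (t - s))) * f s k := by
  set L := lp.evalCLM ℝ (fun _ : ℕ => ℝ) 2 k
  have hL : EqOn (fun s => L (S (t - s) (f s))) (fun s => exp (-(lam k * (t - s))) * f s k)
      (uIcc 0 t) := fun s hs => by
    rw [uIcc_of_le ht] at hs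
    exact hS (t - s) (by linarith [hs.2]) (f s) k
  refine ⟨IntervalIntegrable.congr (hL.mono uIoc_subset_uIcc)
    ⟨L.integrable_comp hG.1, L.integrable_comp hG.2⟩, ?_⟩
  rw [← intervalIntegral.integral_congr hL, L.intervalIntegral_comp_comm hG]
  rfl

lemma norm_toEuclideanOn_smoothing_le {F : Finset ℕ} {lam : ℕ → ℝ} {t θ : ℝ} {x : Hsp}
    (hlam : ∀ k, 0 < lam k) (ht : 0 < t) (hθ0 : 0 ≤ θ) (hθ1 : θ ≤ 1) (hx : memD lam θ x) :
    ‖toEuclideanOn F (fun k => lam k * exp (-(lam k * t)) * x k)‖ ≤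
      t ^ (θ - 1) * nrmD lam θ x :=
  norm_toEuclideanOn_mul_le_nrmD (fun k => (hlam k).le) hx (rpow_pos_of_pos ht _).le
    fun k => by
    rw [abs_of_pos (by have := hlam k; positivity)]
    exact mul_exp_neg_mul_le_rpow (hlam k) ht hθ0 hθ1

lemma norm_toEuclideanOn_exp_mul_sub_le {F : Finset ℕ} {lam : ℕ → ℝ} {lam0 K β t s : ℝ}
    (hlam0 : 0 < lam0) (hlam : ∀ k, lam0 ≤ lam k) (hK : 0 ≤ K) (hβ0 : 0 < β) (hβ1 : β < 1)
    (hs : 0 < s) (hst : s < t) {y : Hsp} (hy : ‖y‖ ≤ K * (t - s) ^ β * (1 + s ^ (-β))) :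
    ‖toEuclideanOn F (fun k => lam k * exp (-(lam k * (t - s))) * y k)‖ ≤
      2 * K * ((t - s) ^ (β - 1) * exp (-(lam0 / 2 * (t - s))) +
        ((t / 2) ^ (β - 1) * s ^ (-β) + (t / 2) ^ (-β) * (t - s) ^ (β - 1))) := by
  have hτ : 0 < t - s := sub_pos.2 hst
  set E := exp (-(lam0 / 2 * (t - s)))
  have hE : E ≤ 1 := exp_le_one_iff.2 (by nlinarith)
  have hpow : (t - s) ^ β = (t - s) ^ (β - 1) * (t - s) := by
    rw [rpow_sub_one hτ.ne']; field_simp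
  have h₁ : 0 ≤ (t - s) ^ (β - 1) := rpow_nonneg hτ.le _
  have h₂ : 0 ≤ s ^ (-β) := rpow_nonneg hs.le _
  calc ‖toEuclideanOn F (fun k => lam k * exp (-(lam k * (t - s))) * y k)‖
      ≤ 2 / (t - s) * E * ‖y‖ := norm_toEuclideanOn_mul_le (fun k => by
        rw [abs_of_pos (by have := hlam0.trans_le (hlam k); positivity)]
        exact mul_exp_neg_mul_le_of_le (hlam k) hτ) y
    _ ≤ 2 / (t - s) * E * (K * (t - s) ^ β * (1 + s ^ (-β))) := by gcongr
    _ = 2 * K * ((t - s) ^ (β - 1) * E + (t - s) ^ (β - 1) * s ^ (-β) * E) := by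
        rw [hpow]; field_simp
    _ ≤ 2 * K * ((t - s) ^ (β - 1) * E + (t - s) ^ (β - 1) * s ^ (-β)) := by
        gcongr 2 * K * (_ + ?_); exact mul_le_of_le_one_right (by positivity) hE
    _ ≤ _ := by gcongr; exact rpow_sub_mul_rpow_neg_le hβ0.le hβ1.le hs hst

-- Bounds `∫₀ᵗ (t-s)^{β-1} (e^{-λ₀(t-s)/2} + s^{-β}) ds` uniformly in `t`: a Gamma integral for
-- the first term, and the split of `(t-s)^{β-1} s^{-β}` at `s = t/2` for the second.
def kernelIntegralBound (lam0 β : ℝ) : ℝ :=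
  (1 / (lam0 / 2)) ^ β * Gamma β + (2 ^ (1 - β) / (1 - β) + 2 ^ β / β)

lemma kernelIntegralBound_pos {lam0 β : ℝ} (hlam0 : 0 < lam0) (hβ0 : 0 < β) (hβ1 : β < 1) :
    0 < kernelIntegralBound lam0 β := by
  have := sub_pos.2 hβ1
  unfold kernelIntegralBound
  positivity

lemma norm_integral_toEuclideanOn_exp_mul_sub_le {F : Finset ℕ} {lam : ℕ → ℝ} {lam0 K β t : ℝ}
    (hlam0 : 0 < lam0) (hlam : ∀ k, lam0 ≤ lam k) (hK : 0 ≤ K) (hβ0 : 0 < β) (hβ1 : β < 1)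
    (ht : 0 < t) {f : ℝ → Hsp}
    (hf : ∀ s : ℝ, 0 < s → s < t → ‖f t - f s‖ ≤ K * (t - s) ^ β * (1 + s ^ (-β))) :
    ‖∫ s in 0..t, toEuclideanOn F (fun k => lam k * exp (-(lam k * (t - s))) * (f s - f t) k)‖ ≤
      2 * K * kernelIntegralBound lam0 β := by
  obtain ⟨hI₁, hle₁⟩ :=
    intervalIntegrable_and_integral_rpow_sub_mul_exp_le hβ0 (half_pos hlam0) ht.le
  obtain ⟨hI₂, heq₂⟩ := intervalIntegrable_and_integral_rpow_split_eq hβ0 hβ1 ht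
  refine (intervalIntegral.norm_integral_le_of_norm_le ht.le ?_
    ((hI₁.add hI₂).const_mul (2 * K))).trans ?_
  · filter_upwards [volume.ae_ne t] with s hne hs
    have hst : s < t := hs.2.lt_of_ne hne
    refine norm_toEuclideanOn_exp_mul_sub_le hlam0 hlam hK hβ0 hβ1 hs.1 hst ?_
    rw [norm_sub_rev]; exact hf s hs.1 hst
  · rw [intervalIntegral.integral_const_mul, intervalIntegral.integral_add hI₁ hI₂, heq₂,
      kernelIntegralBound]
    gcongr

lemma norm_toEuclideanOn_mul_mild_le {F : Finset ℕ} {lam : ℕ → ℝ} {lam0 M K β θ t : ℝ}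
    (hlam0 : 0 < lam0) (hlam : ∀ k, lam0 ≤ lam k) (hK : 0 ≤ K) (hβ0 : 0 < β) (hβ1 : β < 1)
    (hθ0 : 0 ≤ θ) (hθ1 : θ ≤ 1) (ht : 0 < t) {f : ℝ → Hsp} (hfM : ‖f t‖ ≤ M)
    (hf : ∀ s, 0 < s → s < t → ‖f t - f s‖ ≤ K * (t - s) ^ β * (1 + s ^ (-β)))
    {x X : Hsp} (hx : memD lam θ x)
    (hint : ∀ k, IntervalIntegrable (fun s => exp (-(lam k * (t - s))) * f s k) volume 0 t)
    (hX : ∀ k, X k = exp (-(lam k * t)) * x k + ∫ s in 0..t, exp (-(lam k * (t - s))) * f s k) :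
    ‖toEuclideanOn F (fun k => lam k * X k)‖ ≤ t ^ (θ - 1) * nrmD lam θ x +
      2 * K * kernelIntegralBound lam0 β + M := by
  have hintegrand : ∀ k, IntervalIntegrable
      (fun s => lam k * exp (-(lam k * (t - s))) * (f s - f t) k) volume 0 t := fun k => by
    refine (((hint k).const_mul (lam k)).sub
      ((Continuous.intervalIntegrable (u := fun s => lam k * exp (-(lam k * (t - s))))
        (by fun_prop) 0 t).mul_const (f t k))).congr fun s _ => ?_
    simp only [lp.coeFn_sub, Pi.sub_apply]; ring
  have hsplit : toEuclideanOn F (fun k => lam k * X k) =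
      toEuclideanOn F (fun k => lam k * exp (-(lam k * t)) * x k) +
      (∫ s in 0..t, toEuclideanOn F (fun k => lam k * exp (-(lam k * (t - s))) * (f s - f t) k)) +
      toEuclideanOn F (fun k => (1 - exp (-(lam k * t))) * f t k) := by
    rw [← toEuclideanOn_intervalIntegral hintegrand]
    ext k
    simp only [toEuclideanOn, WithLp.ofLp_add, Pi.add_apply, hX, mul_add,
      mul_integral_exp_neg_mul_eq (hint k), lp.coeFn_sub, Pi.sub_apply]
    ring
  rw [hsplit]
  refine norm_add₃_le.trans (add_le_add_three
    (norm_toEuclideanOn_smoothing_le (fun k => hlam0.trans_le (hlam k)) ht hθ0 hθ1 hx)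
    (norm_integral_toEuclideanOn_exp_mul_sub_le hlam0 hlam hK hβ0 hβ1 ht hf) ?_)
  refine (norm_toEuclideanOn_mul_le (P := 1) (fun k => ?_) (f t)).trans (by rwa [one_mul])
  have hpos := exp_pos (-(lam k * t))
  have hle : exp (-(lam k * t)) ≤ 1 :=
    exp_le_one_iff.2 (neg_nonpos.2 (mul_pos (hlam0.trans_le (hlam k)) ht).le)
  exact abs_le.2 ⟨by linarith, by linarith⟩

/-- Deterministic core of Proposition A.5: if `f` is bounded by `M` and time-Hölder,
`‖f(t)−f(s)‖ ≤ K (t−s)^β (1+s^{-β})`, and `x ∈ D_θ` with `θ ∈ (0,1]`, then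
`X(t) = S(t)x + ∫₀ᵗ S(t−s)f(s) ds` satisfies `X(t) ∈ D_1 = D(A)` and
`|X(t)|_1 ≤ C (1 + t^{θ−1}) (|x|_θ + M + K)`, `C` depending only on `θ`, `β`, `λ₀`. -/
theorem stmt17
    (lam : ℕ → ℝ) (lam0 : ℝ) (hlam0 : 0 < lam0) (hlam : ∀ k, lam0 ≤ lam k)
    (S : ℝ → Hsp → Hsp)
    (hS : ∀ t : ℝ, 0 ≤ t → ∀ (x : Hsp) (k : ℕ), S t x k = Real.exp (-(lam k * t)) * x k)
    (M K : ℝ) (hM : 0 ≤ M) (hK : 0 ≤ K)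
    (β : ℝ) (hβ : β ∈ Set.Ioo (0:ℝ) 1)
    (θ : ℝ) (hθ : θ ∈ Set.Ioc (0:ℝ) 1) :
    ∃ C > 0, ∀ f : ℝ → Hsp, ContinuousOn f (Set.Ioi 0) →
      (∀ s : ℝ, 0 < s → ‖f s‖ ≤ M) →
      (∀ s t : ℝ, 0 < s → s < t → ‖f t - f s‖ ≤ K * (t - s) ^ β * (1 + s ^ (-β))) →
      ∀ x : Hsp, memD lam θ x → ∀ X : ℝ → Hsp,
      (∀ t : ℝ, 0 < t → X t = S t x + ∫ s in (0:ℝ)..t, S (t - s) (f s)) →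
      ∀ t : ℝ, 0 < t →
        memD lam 1 (X t) ∧
        nrmD lam 1 (X t) ≤ C * (1 + t ^ (θ - 1)) * (nrmD lam θ x + M + K) := by
  obtain ⟨hβ0, hβ1⟩ := hβ
  obtain ⟨hθ0, hθ1⟩ := hθ
  set D := kernelIntegralBound lam0 β
  have hD : 0 < D := kernelIntegralBound_pos hlam0 hβ0 hβ1
  refine ⟨1 + 2 * D, by positivity, fun f _ hfM hfH x hx X hX t ht => ?_⟩
  have hP : 0 < t ^ (θ - 1) := rpow_pos_of_pos ht _
  have hN : 0 ≤ nrmD lam θ x := sqrt_nonneg _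
  refine (memD_one_and_nrmD_le (R := t ^ (θ - 1) * nrmD lam θ x + 2 * K * D + M) (by positivity)
    fun F => ?_).imp_right fun h => h.trans ?_
  · by_cases hG : IntervalIntegrable (fun s => S (t - s) (f s)) volume 0 t
    · have hcoord := apply_intervalIntegral_semigroup hS ht.le hG
      refine norm_toEuclideanOn_mul_mild_le hlam0 hlam hK hβ0 hβ1 hθ0.le hθ1 ht (hfM t ht)
        (fun s hs hst => hfH s t hs hst) hx (fun k => (hcoord k).1) fun k => ?_
      rw [hX t ht, lp.coeFn_add, Pi.add_apply, hS t ht.le, (hcoord k).2]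
    -- Otherwise the integral is `0` by convention, so `X t = S t x`.
    · rw [hX t ht, intervalIntegral.integral_undef hG, add_zero]
      simp only [hS t ht.le, ← mul_assoc]
      refine (norm_toEuclideanOn_smoothing_le (fun k => hlam0.trans_le (hlam k)) ht hθ0.le hθ1
        hx).trans ?_
      linarith [mul_nonneg hK hD.le]
  · nlinarith [mul_nonneg hP.le hN, mul_nonneg hP.le hM, mul_nonneg hP.le hK, mul_nonneg hD.le hN,
      mul_nonneg hD.le hM, mul_nonneg (mul_nonneg hD.le hP.le) (add_nonneg (add_nonneg hN hM) hK)]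

end
end
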